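/- arXiv:math/0004101 — 5 statements merged into one kernel-verified Lean document; each statement's English description precedes it below -/
import Mathlib

section
/- Let E and F be Banach spaces such that every bounded linear operator from E into the dual space F* is completely continuous. If (x_n) is a weakly null sequence in E and (y_n) is a bounded sequence in F, then the sequence (x_n ⊗ y_n) is weakly null in the projective tensor product E ⊗̂π F. -/
open Filter Topology MeasureTheory

/-- A sequence in a normed space is *weakly null* if it converges to `0` in the weak topology,
i.e. `φ (x n) → 0` for every continuous linear functional `φ`. -/
def WeaklyNull {E : Type*} [NormedAddCommGroup E] [NormedSpace ℝ E] (x : ℕ → E) : Prop :=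
  ∀ φ : E →L[ℝ] ℝ, Tendsto (fun n => φ (x n)) atTop (𝓝 0)

/-- An operator is *completely continuous* if it maps weakly convergent sequences to norm
convergent sequences. -/
def CompletelyContinuous {E F : Type*} [NormedAddCommGroup E] [NormedSpace ℝ E]
    [NormedAddCommGroup F] [NormedSpace ℝ F] (T : E →L[ℝ] F) : Prop :=
  ∀ (x : ℕ → E) (x₀ : E),
    (∀ φ : E →L[ℝ] ℝ, Tendsto (fun n => φ (x n)) atTop (𝓝 (φ x₀))) →
    Tendsto (fun n => T (x n)) atTop (𝓝 (T x₀))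

/-- A Banach space has the *Schur property* if every weakly null sequence is norm null. -/
def SchurProperty (E : Type*) [NormedAddCommGroup E] [NormedSpace ℝ E] : Prop :=
  ∀ x : ℕ → E, WeaklyNull x → Tendsto x atTop (𝓝 0)

/-- A Banach space has the *Dunford–Pettis property* if `φₙ(xₙ) → 0` whenever `(xₙ)` is weakly
null in `E` and `(φₙ)` is weakly null in the dual `E*`. -/
def DunfordPettisProperty (E : Type*) [NormedAddCommGroup E] [NormedSpace ℝ E] : Prop :=
  ∀ (x : ℕ → E) (φ : ℕ → E →L[ℝ] ℝ), WeaklyNull x → WeaklyNull φ →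
    Tendsto (fun n => φ n (x n)) atTop (𝓝 0)

/-- `F` contains a (closed, isomorphic) copy of `X`: there is an isomorphic embedding of `X`
into `F` (its range is automatically a closed subspace when `X` is complete). -/
def ContainsCopy (F X : Type*) [NormedAddCommGroup F] [NormedSpace ℝ F]
    [NormedAddCommGroup X] [NormedSpace ℝ X] : Prop :=
  ∃ (e : X →L[ℝ] F) (c : ℝ), 0 < c ∧ ∀ x, c * ‖x‖ ≤ ‖e x‖

/-- `F` contains a *complemented* copy of `X`: there is an embedding `e : X → F` admitting a
bounded linear left inverse (equivalently, a complemented closed subspace isomorphic to `X`). -/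
def ContainsComplementedCopy (F X : Type*) [NormedAddCommGroup F] [NormedSpace ℝ F]
    [NormedAddCommGroup X] [NormedSpace ℝ X] : Prop :=
  ∃ (e : X →L[ℝ] F) (r : F →L[ℝ] X), r.comp e = ContinuousLinearMap.id ℝ X

/-- A realization of the projective tensor product `E ⊗̂π F` as a Banach space `X`:
a bounded bilinear map `tmul` of norm `≤ 1` whose range spans a dense subspace, and such that
every bounded bilinear form on `E × F` lifts to a functional on `X` of no greater norm.
Together with completeness of `X`, these properties characterize `E ⊗̂π F` up to isometric
isomorphism. -/
structure ProjectiveTensorProduct (X E F : Type*) [NormedAddCommGroup X] [NormedSpace ℝ X]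
    [NormedAddCommGroup E] [NormedSpace ℝ E] [NormedAddCommGroup F] [NormedSpace ℝ F] where
  tmul : E →L[ℝ] F →L[ℝ] X
  norm_tmul_le : ∀ x y, ‖tmul x y‖ ≤ ‖x‖ * ‖y‖
  dense_span : Dense (↑(Submodule.span ℝ (Set.range fun p : E × F => tmul p.1 p.2)) : Set X)
  lift : ∀ B : E →L[ℝ] F →L[ℝ] ℝ, ∃ φ : X →L[ℝ] ℝ, ‖φ‖ ≤ ‖B‖ ∧ ∀ x y, φ (tmul x y) = B x y

/-- A realization of the injective tensor product `E ⊗̂ε F` as a Banach space `X`: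
a bilinear map `tmul` whose range spans a dense subspace and such that the norm of any finite
sum of elementary tensors is the injective norm
`sup { |Σ φ(xᵢ) ψ(yᵢ)| : ‖φ‖ ≤ 1, ‖ψ‖ ≤ 1 }`.  Together with completeness of `X`, these
properties characterize `E ⊗̂ε F` up to isometric isomorphism. -/
structure InjectiveTensorProduct (X E F : Type*) [NormedAddCommGroup X] [NormedSpace ℝ X]
    [NormedAddCommGroup E] [NormedSpace ℝ E] [NormedAddCommGroup F] [NormedSpace ℝ F] where
  tmul : E →L[ℝ] F →L[ℝ] X
  dense_span : Dense (↑(Submodule.span ℝ (Set.range fun p : E × F => tmul p.1 p.2)) : Set X)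
  norm_sum : ∀ (n : ℕ) (x : Fin n → E) (y : Fin n → F),
    ‖∑ i, tmul (x i) (y i)‖ =
      sSup { r : ℝ | ∃ (φ : E →L[ℝ] ℝ) (ψ : F →L[ℝ] ℝ), ‖φ‖ ≤ 1 ∧ ‖ψ‖ ≤ 1 ∧
        r = |∑ i, φ (x i) * ψ (y i)| }

/-- The Banach space `ℓ₁` of absolutely summable real sequences. -/
noncomputable abbrev ellOne : Type := lp (fun _ : ℕ => ℝ) 1

/-- If every bounded operator `E → F*` is completely continuous, `(xₙ)` is weakly null in `E`
and `(yₙ)` is bounded in `F`, then `(xₙ ⊗ yₙ)` is weakly null in `E ⊗̂π F`. -/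
theorem weaklyNull_tmul_of_forall_completelyContinuous
    {E F X : Type*} [NormedAddCommGroup E] [NormedSpace ℝ E] [CompleteSpace E]
    [NormedAddCommGroup F] [NormedSpace ℝ F] [CompleteSpace F]
    [NormedAddCommGroup X] [NormedSpace ℝ X] [CompleteSpace X]
    (h : ProjectiveTensorProduct X E F)
    (hcc : ∀ T : E →L[ℝ] (F →L[ℝ] ℝ), CompletelyContinuous T)
    (x : ℕ → E) (hx : WeaklyNull x)
    (y : ℕ → F) (hy : ∃ C : ℝ, ∀ n, ‖y n‖ ≤ C) :
    WeaklyNull (fun n => h.tmul (x n) (y n)) := by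
  intro φ
  obtain ⟨C, hC⟩ := hy
  set T : E →L[ℝ] (F →L[ℝ] ℝ) :=
    ((ContinuousLinearMap.compSL F X ℝ (RingHom.id ℝ) (RingHom.id ℝ)) φ).comp h.tmul with hT
  have hTx : Tendsto (fun n => T (x n)) atTop (𝓝 0) := by
    have := hcc T x 0 (fun ψ => by simpa using hx ψ)
    simpa using this
  have key : ∀ n, φ (h.tmul (x n) (y n)) = T (x n) (y n) := fun n => rfl
  have hbound : ∀ n, ‖T (x n) (y n)‖ ≤ ‖T (x n)‖ * max C 0 := fun n =>
    le_trans ((T (x n)).le_opNorm (y n))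
      (mul_le_mul_of_nonneg_left (le_trans (hC n) (le_max_left _ _)) (norm_nonneg _))
  have hlim : Tendsto (fun n => ‖T (x n)‖ * max C 0) atTop (𝓝 0) := by
    have := (hTx.norm.mul_const (max C 0))
    simpa using this
  exact squeeze_zero_norm (f := fun n => φ (h.tmul (x n) (y n)))
    (fun n => by show ‖φ (h.tmul (x n) (y n))‖ ≤ _; rw [key n]; exact hbound n) hlim
end

section
/- Let E and F be Banach spaces. Suppose that E does not have the Schur property, that F contains a copy of ℓ1, and that every bounded linear operator from E into F* is completely continuous. Then the projective tensor product E ⊗̂π F does not have the Dunford–Pettis property. -/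
open Filter Topology MeasureTheory

noncomputable abbrev ellTwo : Type := lp (fun _ : ℕ => ℝ) 2

namespace DPPaux

open intervalIntegral Real
open scoped ENNReal NNReal

set_option linter.unusedSectionVars false

theorem intCos (c : ℝ) (hc : c ≠ 0) : (∫ t in (0:ℝ)..1, Real.cos (c*t)) = Real.sin c / c := by
  have h := mul_integral_comp_mul_left (f := Real.cos) (c := c) (a := (0:ℝ)) (b := 1)
  rw [mul_zero, mul_one, integral_cos, Real.sin_zero, sub_zero] at h
  rw [eq_div_iff hc, mul_comm]
  exact h

theorem intCosFreq (m : ℤ) (hm : m ≠ 0) : (∫ t in (0:ℝ)..1, Real.cos (2*π*m*t)) = 0 := by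
  have h2 : (2*π*m : ℝ) ≠ 0 := by
    have h := Real.pi_ne_zero
    have : (m:ℝ) ≠ 0 := Int.cast_ne_zero.mpr hm
    positivity
  have hs : Real.sin (2*π*m) = 0 := by
    have : (2*π*m : ℝ) = (2*m : ℤ) * π := by push_cast; ring
    rw [this, Real.sin_int_mul_pi]
  rw [intCos _ h2, hs, zero_div]

theorem cosOrtho (j k : ℕ) : (∫ t in (0:ℝ)..1, Real.cos (2*π*(j+1)*t) * Real.cos (2*π*(k+1)*t))
    = if j = k then 1/2 else 0 := by
  set M : ℤ := (j:ℤ) + 1 + (k + 1) with hM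
  set N : ℤ := (j:ℤ) - k with hN
  have key : ∀ t : ℝ, Real.cos (2*π*(j+1)*t) * Real.cos (2*π*(k+1)*t)
      = (Real.cos (2*π*(M:ℝ)*t) + Real.cos (2*π*(N:ℝ)*t)) / 2 := by
    intro t
    have e1 : (2*π*(M:ℝ))*t = 2*π*(j+1)*t + 2*π*(k+1)*t := by rw [hM]; push_cast; ring
    have e2 : (2*π*(N:ℝ))*t = 2*π*(j+1)*t - 2*π*(k+1)*t := by rw [hN]; push_cast; ring
    rw [e1, e2, Real.cos_add, Real.cos_sub]
    ring
  simp only [key]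
  have i1 : IntervalIntegrable (fun t => Real.cos (2*π*(M:ℝ)*t)) MeasureTheory.volume 0 1 :=
    (Real.continuous_cos.comp (continuous_const.mul continuous_id)).intervalIntegrable 0 1
  have i2 : IntervalIntegrable (fun t => Real.cos (2*π*(N:ℝ)*t)) MeasureTheory.volume 0 1 :=
    (Real.continuous_cos.comp (continuous_const.mul continuous_id)).intervalIntegrable 0 1
  rw [intervalIntegral.integral_div, intervalIntegral.integral_add i1 i2,
    intCosFreq M (by omega), zero_add]
  by_cases h : j = k
  · subst h
    have : N = 0 := by omega
    simp only [this, Int.cast_zero, mul_zero, zero_mul, Real.cos_zero]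
    simp
  · rw [intCosFreq N (by omega)]
    simp [h]



theorem ellOne.summable_norm (z : ellOne) : Summable fun k => ‖z k‖ := by
  have h := (lp.memℓp z).summable (p := 1) (by simp)
  simpa using h

theorem ellOne.hasSum_norm (z : ellOne) : HasSum (fun k => ‖z k‖) ‖z‖ := by
  have h := lp.hasSum_norm (p := 1) (E := fun _ : ℕ => ℝ) (by simp) z
  simpa using h

theorem chi_summable (t : ℝ) (z : ellOne) :
    Summable fun k => z k * Real.cos (2*π*(k+1)*t) := by
  apply Summable.of_norm
  apply Summable.of_nonneg_of_le (fun k => norm_nonneg _) (fun k => ?_) (ellOne.summable_norm z)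
  rw [norm_mul]
  calc ‖z k‖ * ‖Real.cos (2*π*(k+1)*t)‖ ≤ ‖z k‖ * 1 := by
        apply mul_le_mul_of_nonneg_left _ (norm_nonneg _)
        rw [Real.norm_eq_abs]; exact Real.abs_cos_le_one _
    _ = ‖z k‖ := mul_one _

noncomputable def chi (t : ℝ) : ellOne →ₗ[ℝ] ℝ where
  toFun z := ∑' k, z k * Real.cos (2*π*(k+1)*t)
  map_add' z w := by
    have hz := chi_summable t z
    have hw := chi_summable t w
    simp only []
    rw [← Summable.tsum_add hz hw]
    apply tsum_congr
    intro k
    have : (↑(z + w) : ℕ → ℝ) k = z k + w k := by rw [lp.coeFn_add]; rfl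
    rw [this]; ring
  map_smul' c z := by
    simp only [RingHom.id_apply]
    rw [smul_eq_mul, ← tsum_mul_left]
    apply tsum_congr
    intro k
    have : (↑(c • z) : ℕ → ℝ) k = c * z k := by rw [lp.coeFn_smul]; rfl
    rw [this]; ring

theorem chi_bound (t : ℝ) (z : ellOne) : |chi t z| ≤ ‖z‖ := by
  have h1 : |chi t z| ≤ ∑' k, ‖z k * Real.cos (2*π*(k+1)*t)‖ := by
    rw [← Real.norm_eq_abs]
    exact norm_tsum_le_tsum_norm (chi_summable t z).norm
  refine h1.trans ?_
  rw [← (ellOne.hasSum_norm z).tsum_eq]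
  apply Summable.tsum_le_tsum _ (chi_summable t z).norm (ellOne.summable_norm z)
  intro k
  rw [norm_mul]
  calc ‖z k‖ * ‖Real.cos (2*π*(k+1)*t)‖ ≤ ‖z k‖ * 1 := by
        apply mul_le_mul_of_nonneg_left _ (norm_nonneg _)
        rw [Real.norm_eq_abs]; exact Real.abs_cos_le_one _
    _ = ‖z k‖ := mul_one _

theorem chi_single (t : ℝ) (j : ℕ) : chi t (lp.single 1 j (1:ℝ)) = Real.cos (2*π*(j+1)*t) := by
  have h : ∀ k, k ≠ j → (lp.single 1 j (1:ℝ) : ℕ → ℝ) k * Real.cos (2*π*(k+1)*t) = 0 := by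
    intro k hk
    rw [lp.single_apply_ne _ _ _ hk]
    · ring
  have := tsum_eq_single (L := SummationFilter.unconditional ℕ) (f := fun k => (lp.single 1 j (1:ℝ) : ℕ → ℝ) k * Real.cos (2*π*(k+1)*t)) j h
  rw [chi]
  simp only [LinearMap.coe_mk, AddHom.coe_mk]
  rw [this]
  show (lp.single 1 j (1:ℝ) : ℕ → ℝ) j * Real.cos (2*π*(j+1)*t) = _
  rw [lp.single_apply_self, one_mul]


section HahnBanachSpace

variable {ι : Type*} [Nonempty ι]

variable {ι : Type*} [Nonempty ι]

def Wb (ι : Type*) : Submodule ℝ (ι → ℝ) where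
  carrier := {u | ∃ C, ∀ G, |u G| ≤ C}
  add_mem' := by
    rintro u v ⟨C, hC⟩ ⟨D, hD⟩
    exact ⟨C + D, fun G => (abs_add_le _ _).trans (add_le_add (hC G) (hD G))⟩
  zero_mem' := ⟨0, fun G => by simp⟩
  smul_mem' := by
    rintro a u ⟨C, hC⟩
    refine ⟨|a| * C, fun G => ?_⟩
    show |a * u G| ≤ |a| * C
    rw [abs_mul]
    have h0 : (0:ℝ) ≤ |a| := abs_nonneg a
    exact mul_le_mul_of_nonneg_left (hC G) h0

noncomputable def pW (u : Wb ι) : ℝ := sSup (Set.range fun G => |u.1 G|)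

theorem pW_bddAbove (u : Wb ι) : BddAbove (Set.range fun G => |u.1 G|) := by
  obtain ⟨C, hC⟩ := u.2
  exact ⟨C, by rintro x ⟨G, rfl⟩; exact hC G⟩

theorem le_pW (u : Wb ι) (G : ι) : |u.1 G| ≤ pW u :=
  le_csSup (pW_bddAbove u) ⟨G, rfl⟩

theorem pW_le (u : Wb ι) (C : ℝ) (hC : ∀ G, |u.1 G| ≤ C) : pW u ≤ C := by
  apply Real.sSup_le
  · rintro x ⟨G, rfl⟩; exact hC G
  · exact (abs_nonneg _).trans (hC (Classical.arbitrary ι))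

theorem pW_nonneg (u : Wb ι) : 0 ≤ pW u :=
  (abs_nonneg _).trans (le_pW u (Classical.arbitrary ι))

theorem pW_add (u v : Wb ι) : pW (u + v) ≤ pW u + pW v := by
  apply pW_le
  intro G
  show |u.1 G + v.1 G| ≤ _
  exact (abs_add_le _ _).trans (add_le_add (le_pW u G) (le_pW v G))

theorem pW_smul (a : ℝ) (ha : 0 < a) (u : Wb ι) : pW (a • u) = a * pW u := by
  apply le_antisymm
  · apply pW_le
    intro G
    show |a * u.1 G| ≤ _
    rw [abs_mul, abs_of_pos ha]
    exact mul_le_mul_of_nonneg_left (le_pW u G) ha.le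
  · have key : ∀ G, |u.1 G| ≤ (1/a) * pW (a • u) := by
      intro G
      have h := le_pW (a • u) G
      have h2 : |(a • u).1 G| = a * |u.1 G| := by
        show |a * u.1 G| = _
        rw [abs_mul, abs_of_pos ha]
      rw [h2] at h
      rw [div_mul_eq_mul_div, one_mul, le_div_iff₀ ha, mul_comm]
      exact h
    have h3 := pW_le u _ key
    calc a * pW u ≤ a * ((1/a) * pW (a • u)) := by gcongr
      _ = pW (a • u) := by field_simp

variable (Gm : ℝ → ι)

def Mint : Submodule ℝ (Wb ι) where
  carrier := {u | IntervalIntegrable (fun t => u.1 (Gm t)) volume 0 1}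
  add_mem' := by
    intro u v hu hv
    exact hu.add hv
  zero_mem' := by
    simpa using intervalIntegrable_const (μ := volume) (a := (0:ℝ)) (b := 1) (c := (0:ℝ))
  smul_mem' := by
    intro a u hu
    exact hu.const_mul a

def oneW : Wb ι := ⟨fun _ => 1, ⟨1, fun G => by simp⟩⟩

theorem exists_Lambda : ∃ Λ : Wb ι →ₗ[ℝ] ℝ,
    (∀ u, Λ u ≤ pW u) ∧
    (∀ u ∈ Mint Gm, Λ u = ∫ t in (0:ℝ)..1, u.1 (Gm t)) ∧
    (∀ u : Wb ι, (∀ G, 0 ≤ u.1 G) → 0 ≤ Λ u) := by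
  set f : Wb ι →ₗ.[ℝ] ℝ :=
    ⟨Mint Gm, { toFun := fun u => ∫ t in (0:ℝ)..1, ((u : Wb ι) : ι → ℝ) (Gm t)
                map_add' := by
                  rintro ⟨u, hu⟩ ⟨v, hv⟩
                  exact intervalIntegral.integral_add hu hv
                map_smul' := by
                  rintro a ⟨u, hu⟩
                  simp only [RingHom.id_apply, smul_eq_mul]
                  rw [← intervalIntegral.integral_const_mul]
                  rfl }⟩ with hfdef
  have habs : ∀ u : f.domain, |f u| ≤ pW u.1 := by
    rintro ⟨u, hu⟩
    have h1 : ‖∫ t in (0:ℝ)..1, u.1 (Gm t)‖ ≤ pW u * |(1:ℝ) - 0| :=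
      intervalIntegral.norm_integral_le_of_norm_le_const (fun t _ => by
        rw [Real.norm_eq_abs]; exact le_pW u (Gm t))
    exact (by simpa using h1 : |∫ t in (0:ℝ)..1, u.1 (Gm t)| ≤ pW u)
  have hfN : ∀ u : f.domain, f u ≤ pW u.1 :=
    fun u => (abs_le.mp (habs u)).2
  obtain ⟨Λ, hΛ1, hΛ2⟩ := exists_extension_of_le_sublinear f pW
    (fun a ha u => pW_smul a ha u) (fun u v => pW_add u v) hfN
  have hone : Λ (oneW) = 1 := by
    have hmem : (oneW : Wb ι) ∈ Mint Gm := by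
      show IntervalIntegrable (fun _ => (1:ℝ)) volume 0 1
      exact intervalIntegrable_const
    have := hΛ1 ⟨oneW, hmem⟩
    rw [this]
    show (∫ t in (0:ℝ)..1, (1:ℝ)) = 1
    simp
  refine ⟨Λ, hΛ2, ?_, ?_⟩
  · intro u hu
    exact hΛ1 ⟨u, hu⟩
  · intro u hupos
    set P := pW u with hP
    have hPnn : 0 ≤ P := pW_nonneg u
    have hle : Λ (P • oneW - u) ≤ P := by
      refine (hΛ2 _).trans (pW_le _ _ ?_)
      intro G
      show |P * 1 - u.1 G| ≤ P
      rw [mul_one, abs_le]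
      constructor
      · have := (abs_le.mp (le_pW u G)).2
        linarith
      · have := hupos G
        linarith
    have hlin : Λ (P • oneW - u) = P * Λ oneW - Λ u := by
      rw [map_sub, _root_.map_smul, smul_eq_mul]
    rw [hlin, hone, mul_one] at hle
    linarith


theorem WbMem {ι : Type*} (u : ι → ℝ) (C : ℝ) (h : ∀ G, |u G| ≤ C) : u ∈ Wb ι := ⟨C, h⟩

theorem MintMem {ι : Type*} [Nonempty ι] {Gm : ℝ → ι} (u : Wb ι)
    (h : IntervalIntegrable (fun t => u.1 (Gm t)) volume 0 1) : u ∈ Mint Gm := h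

end HahnBanachSpace

section Beta

variable {F : Type*} [NormedAddCommGroup F] [NormedSpace ℝ F]


theorem exists_G (i : ellOne →L[ℝ] F) (c : ℝ) (hc : 0 < c) (hci : ∀ z, c*‖z‖ ≤ ‖i z‖) (t : ℝ) :
    ∃ G : F →L[ℝ] ℝ, ‖G‖ ≤ 1 ∧ ∀ z : ellOne, G (i z) = c * chi t z := by
  have hinj : Function.Injective i.toLinearMap := by
    intro a b hab
    have hab' : i a = i b := hab
    have h0 : i (a - b) = 0 := by rw [map_sub, hab', sub_self]
    have := hci (a - b)
    rw [h0, norm_zero] at this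
    have : ‖a - b‖ ≤ 0 := by nlinarith [norm_nonneg (a-b)]
    have : a - b = 0 := by
      rw [← norm_le_zero_iff]
      exact this
    exact sub_eq_zero.mp this
  set S := LinearMap.range i.toLinearMap with hS
  set e := LinearEquiv.ofInjective i.toLinearMap hinj with he
  set f : F →ₗ.[ℝ] ℝ := ⟨S, (chi t).comp e.symm.toLinearMap⟩ with hf
  have hfN : ∀ x : f.domain, f x ≤ (1/c) * ‖(x:F)‖ := by
    intro x
    have hx : (x : F) = i (e.symm x) := by
      conv_lhs => rw [← e.apply_symm_apply x]
      rw [LinearEquiv.ofInjective_apply]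
      rfl
    have h1 : f x = chi t (e.symm x) := rfl
    have h2 := chi_bound t (e.symm x)
    have h3 := hci (e.symm x)
    rw [← hx] at h3
    rw [h1]
    have h4 : chi t (e.symm x) ≤ ‖e.symm x‖ := (abs_le.mp h2).2
    refine h4.trans ?_
    rw [div_mul_eq_mul_div, one_mul, le_div_iff₀ hc, mul_comm]
    exact h3
  obtain ⟨g, hg1, hg2⟩ := exists_extension_of_le_sublinear f (fun y => (1/c) * ‖y‖)
    (fun a ha y => by
      show (1/c) * ‖a • y‖ = a * ((1/c) * ‖y‖)
      rw [norm_smul, Real.norm_eq_abs, abs_of_pos ha]; ring)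
    (fun x y => by
      show (1/c) * ‖x + y‖ ≤ (1/c) * ‖x‖ + (1/c) * ‖y‖
      rw [← mul_add]
      have h1c : (0:ℝ) ≤ 1/c := by positivity
      exact mul_le_mul_of_nonneg_left (norm_add_le x y) h1c) hfN
  have hgabs : ∀ y, |g y| ≤ (1/c) * ‖y‖ := by
    intro y
    rw [abs_le]
    constructor
    · have := hg2 (-y)
      rw [map_neg, norm_neg] at this
      linarith
    · exact hg2 y
  set G' := g.mkContinuous (1/c) (fun y => by rw [Real.norm_eq_abs]; exact hgabs y) with hG'
  refine ⟨c • G', ?_, ?_⟩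
  · have hb := g.mkContinuous_norm_le (C := 1/c) (by positivity)
      (fun y => by rw [Real.norm_eq_abs]; exact hgabs y)
    calc ‖c • G'‖ ≤ ‖c‖ * ‖G'‖ := norm_smul_le c G'
      _ ≤ c * (1/c) := by
          rw [Real.norm_eq_abs, abs_of_pos hc]
          gcongr
      _ = 1 := by field_simp
  · intro z
    have hmem : i z ∈ S := ⟨z, rfl⟩
    have h1 : g (i z) = f ⟨i z, hmem⟩ := hg1 ⟨i z, hmem⟩
    have h2 : f ⟨i z, hmem⟩ = chi t (e.symm ⟨i z, hmem⟩) := rfl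
    have h3 : e.symm ⟨i z, hmem⟩ = z := by
      apply e.injective
      rw [e.apply_symm_apply]
      apply Subtype.ext
      rw [LinearEquiv.ofInjective_apply]
      rfl
    show c • G' (i z) = c * chi t z
    rw [show G' (i z) = g (i z) from rfl, h1, h2, h3, smul_eq_mul]


theorem exists_beta (i : ellOne →L[ℝ] F) (c : ℝ) (hc : 0 < c) (hci : ∀ z, c*‖z‖ ≤ ‖i z‖) :
    ∃ β : F →ₗ[ℝ] F →ₗ[ℝ] ℝ,
      (∀ y y', β y y' = β y' y) ∧
      (∀ y, 0 ≤ β y y) ∧ (∀ y, β y y ≤ ‖y‖^2) ∧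
      (∀ j k, β (i (lp.single 1 j 1)) (i (lp.single 1 k 1)) = if j = k then c^2/2 else 0) := by
  classical
  set κ := {φ : F →L[ℝ] ℝ // ‖φ‖ ≤ 1} with hκ
  have : Nonempty κ := ⟨⟨0, by simp⟩⟩
  set Gm : ℝ → κ := fun t => ⟨Classical.choose (exists_G i c hc hci t),
    (Classical.choose_spec (exists_G i c hc hci t)).1⟩ with hGm
  have hGval : ∀ t z, (Gm t).1 (i z) = c * chi t z :=
    fun t => (Classical.choose_spec (exists_G i c hc hci t)).2
  obtain ⟨Λ, hΛle, hΛint, hΛpos⟩ := exists_Lambda Gm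
  set prodW : F → F → Wb κ := fun y y' =>
    ⟨fun G => G.1 y * G.1 y', WbMem _ (‖y‖ * ‖y'‖) (fun G => by
      rw [abs_mul]
      have h1 : |G.1 y| ≤ ‖y‖ := by
        calc |G.1 y| = ‖G.1 y‖ := rfl
          _ ≤ ‖G.1‖ * ‖y‖ := G.1.le_opNorm y
          _ ≤ 1 * ‖y‖ := by gcongr; exact G.2
          _ = ‖y‖ := one_mul _
      have h2 : |G.1 y'| ≤ ‖y'‖ := by
        calc |G.1 y'| = ‖G.1 y'‖ := rfl
          _ ≤ ‖G.1‖ * ‖y'‖ := G.1.le_opNorm y'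
          _ ≤ 1 * ‖y'‖ := by gcongr; exact G.2
          _ = ‖y'‖ := one_mul _
      exact mul_le_mul h1 h2 (abs_nonneg _) (norm_nonneg _))⟩ with hprodW
  set β : F →ₗ[ℝ] F →ₗ[ℝ] ℝ := LinearMap.mk₂ ℝ (fun y y' => Λ (prodW y y'))
    (fun y₁ y₂ y' => by
      show Λ (prodW (y₁ + y₂) y') = Λ (prodW y₁ y') + Λ (prodW y₂ y')
      rw [← map_add]
      congr 1
      apply Subtype.ext
      funext G
      show (G.1 (y₁ + y₂)) * G.1 y' = G.1 y₁ * G.1 y' + G.1 y₂ * G.1 y'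
      rw [map_add]; ring)
    (fun a y y' => by
      show Λ (prodW (a • y) y') = a • Λ (prodW y y')
      rw [← _root_.map_smul]
      congr 1
      apply Subtype.ext
      funext G
      show (G.1 (a • y)) * G.1 y' = a * (G.1 y * G.1 y')
      rw [G.1.map_smul]; simp only [smul_eq_mul]; ring)
    (fun y y₁ y₂ => by
      show Λ (prodW y (y₁ + y₂)) = Λ (prodW y y₁) + Λ (prodW y y₂)
      rw [← map_add]
      congr 1
      apply Subtype.ext
      funext G
      show (G.1 y) * G.1 (y₁ + y₂) = G.1 y * G.1 y₁ + G.1 y * G.1 y₂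
      rw [map_add]; ring)
    (fun a y y' => by
      show Λ (prodW y (a • y')) = a • Λ (prodW y y')
      rw [← _root_.map_smul]
      congr 1
      apply Subtype.ext
      funext G
      show (G.1 y) * G.1 (a • y') = a * (G.1 y * G.1 y')
      rw [G.1.map_smul]; simp only [smul_eq_mul]; ring) with hβ
  refine ⟨β, ?_, ?_, ?_, ?_⟩
  · intro y y'
    show Λ (prodW y y') = Λ (prodW y' y)
    congr 1
    apply Subtype.ext
    funext G
    show G.1 y * G.1 y' = G.1 y' * G.1 y
    ring
  · intro y
    exact hΛpos _ (fun G => mul_self_nonneg _)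
  · intro y
    show Λ (prodW y y) ≤ ‖y‖^2
    refine (hΛle _).trans ?_
    rw [pow_two]
    apply pW_le
    intro G
    show |G.1 y * G.1 y| ≤ ‖y‖ * ‖y‖
    rw [abs_mul]
    have h1 : |G.1 y| ≤ ‖y‖ := by
      calc |G.1 y| = ‖G.1 y‖ := rfl
        _ ≤ ‖G.1‖ * ‖y‖ := G.1.le_opNorm y
        _ ≤ 1 * ‖y‖ := by gcongr; exact G.2
        _ = ‖y‖ := one_mul _
    exact mul_le_mul h1 h1 (abs_nonneg _) (norm_nonneg _)
  · intro j k
    set u := prodW (i (lp.single 1 j 1)) (i (lp.single 1 k 1)) with hu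
    have hfun : (fun t => u.1 (Gm t))
        = fun t => c^2 * (Real.cos (2*π*(j+1)*t) * Real.cos (2*π*(k+1)*t)) := by
      funext t
      show (Gm t).1 (i (lp.single 1 j 1)) * (Gm t).1 (i (lp.single 1 k 1)) = _
      rw [hGval, hGval, chi_single, chi_single]
      ring
    have hmem : u ∈ Mint Gm := by
      apply MintMem
      rw [hfun]
      apply Continuous.intervalIntegrable
      exact continuous_const.mul
        ((Real.continuous_cos.comp (continuous_const.mul continuous_id)).mul
         (Real.continuous_cos.comp (continuous_const.mul continuous_id)))
    show Λ u = _
    rw [hΛint u hmem]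
    calc (∫ t in (0:ℝ)..1, u.1 (Gm t))
        = ∫ t in (0:ℝ)..1, c^2 * (Real.cos (2*π*(j+1)*t) * Real.cos (2*π*(k+1)*t)) := by rw [hfun]
      _ = c^2 * ∫ t in (0:ℝ)..1, Real.cos (2*π*(j+1)*t) * Real.cos (2*π*(k+1)*t) :=
          intervalIntegral.integral_const_mul _ _
      _ = c^2 * (if j = k then 1/2 else 0) := by rw [cosOrtho]
      _ = if j = k then c^2/2 else 0 := by
          by_cases h : j = k <;> simp [h] <;> ring


theorem bessel (β : F →ₗ[ℝ] F →ₗ[ℝ] ℝ) (hsymm : ∀ y y', β y y' = β y' y)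
    (hpos : ∀ y, 0 ≤ β y y) (w : ℕ → F) (r : ℝ) (hr : 0 < r)
    (horth : ∀ j k, β (w j) (w k) = if j = k then r else 0)
    (y : F) (s : Finset ℕ) :
    ∑ n ∈ s, (β (w n) y)^2 ≤ r * β y y := by
  set b : ℕ → ℝ := fun n => β (w n) y with hb
  set v : F := ∑ n ∈ s, ((1/r) * b n) • w n with hv
  set T : ℝ := ∑ n ∈ s, (b n)^2 with hT
  have hβyv : β y v = (1/r) * T := by
    rw [hv, map_sum]
    rw [hT, Finset.mul_sum]
    apply Finset.sum_congr rfl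
    intro n _
    rw [_root_.map_smul, smul_eq_mul, hsymm y (w n)]
    ring
  have hβvy : β v y = (1/r) * T := by
    rw [hsymm v y, hβyv]
  have hwm : ∀ m ∈ s, β v (w m) = b m := by
    intro m hm
    rw [hsymm v (w m)]
    conv_lhs => rw [hv]
    rw [map_sum]
    have inner : ∀ n ∈ s, β (w m) ((1/r * b n) • w n) = if m = n then b m else 0 := by
      intro n _
      rw [_root_.map_smul, smul_eq_mul, horth m n]
      by_cases hmn : m = n
      · subst hmn
        rw [if_pos rfl, if_pos rfl]
        field_simp
      · rw [if_neg hmn, if_neg hmn, mul_zero]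
    rw [Finset.sum_congr rfl inner, Finset.sum_ite_eq, if_pos hm]
  have hβvv : β v v = (1/r) * T := by
    conv_lhs => rw [show β v v = β v (∑ n ∈ s, ((1/r) * b n) • w n) from rfl]
    rw [map_sum]
    have inner : ∀ n ∈ s, β v ((1/r * b n) • w n) = (1/r) * (b n)^2 := by
      intro n hn
      rw [_root_.map_smul, smul_eq_mul, hwm n hn]
      ring
    rw [Finset.sum_congr rfl inner, ← Finset.mul_sum, hT]
  have hkey := hpos (y - v)
  have hexp : β (y - v) (y - v) = β y y - (1/r) * T := by
    rw [map_sub (β (y-v)) y v, hsymm (y-v) y, hsymm (y-v) v,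
      map_sub (β y) y v, map_sub (β v) y v, hβyv, hβvy, hβvv]
    ring
  rw [hexp] at hkey
  have hTle : T ≤ r * β y y := by
    have h2 : (1/r) * T ≤ β y y := by linarith
    calc T = r * ((1/r) * T) := by field_simp
      _ ≤ r * β y y := by
          apply mul_le_mul_of_nonneg_left h2 hr.le
  exact hTle


end Beta

section EllTwo

variable {E F : Type*} [NormedAddCommGroup E] [NormedSpace ℝ E]
  [NormedAddCommGroup F] [NormedSpace ℝ F]


theorem ellTwo.coord_le (h : ellTwo) (n : ℕ) : |h n| ≤ ‖h‖ := by
  have := lp.norm_apply_le_norm (E := fun _ : ℕ => ℝ) (p := 2) (by norm_num) h n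
  simpa using this

theorem ellTwo.sum_sq_le (h : ellTwo) (s : Finset ℕ) : ∑ n ∈ s, (h n)^2 ≤ ‖h‖^2 := by
  have key := lp.sum_rpow_le_norm_rpow (E := fun _ : ℕ => ℝ) (p := 2) (by norm_num) h s
  have h2 : (2 : ℝ≥0∞).toReal = (2:ℝ) := by norm_num
  rw [h2] at key
  have e1 : ∀ n, ‖h n‖ ^ (2:ℝ) = (h n)^2 := fun n => by
    rw [show ((2:ℝ)) = ((2:ℕ):ℝ) by norm_num, Real.rpow_natCast, Real.norm_eq_abs, sq_abs]
  have e2 : ‖h‖ ^ (2:ℝ) = ‖h‖^2 := by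
    rw [show ((2:ℝ)) = ((2:ℕ):ℝ) by norm_num, Real.rpow_natCast]
  calc ∑ n ∈ s, (h n)^2 = ∑ n ∈ s, ‖h n‖ ^ (2:ℝ) := by
        apply Finset.sum_congr rfl; intro n _; rw [e1]
    _ ≤ ‖h‖ ^ (2:ℝ) := key
    _ = ‖h‖^2 := e2

theorem ellTwo.summable_sq (h : ellTwo) : Summable fun n => (h n)^2 := by
  apply summable_of_sum_range_le (c := ‖h‖^2) (fun n => sq_nonneg _)
  intro n
  exact ellTwo.sum_sq_le h (Finset.range n)

/-- every functional on ℓ² sends the unit vectors to a null sequence -/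
theorem ellTwo.weaklyNullSingle (ξ : ellTwo →L[ℝ] ℝ) :
    Tendsto (fun n => ξ (lp.single 2 n (1:ℝ))) atTop (𝓝 0) := by
  obtain ⟨w, hw⟩ := (InnerProductSpace.toDual ℝ ellTwo).surjective ξ
  have hval : ∀ n, ξ (lp.single 2 n (1:ℝ)) = w n := by
    intro n
    rw [← hw]
    rw [InnerProductSpace.toDual_apply_apply]
    rw [lp.inner_eq_tsum]
    rw [tsum_eq_single n]
    · show (lp.single 2 n (1:ℝ) : ∀ _ : ℕ, ℝ) n * w n = w n
      rw [lp.single_apply_self, one_mul]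
    · intro m hm
      show (lp.single 2 n (1:ℝ) : ∀ _ : ℕ, ℝ) m * w m = 0
      rw [lp.single_apply_ne _ _ _ hm, zero_mul]
  simp only [hval]
  have hsq := ellTwo.summable_sq w
  have h1 : Tendsto (fun n => (w n)^2) atTop (𝓝 0) := hsq.tendsto_atTop_zero
  have h2 : Tendsto (fun n => |w n|) atTop (𝓝 0) := by
    have : Tendsto (fun n => Real.sqrt ((w n)^2)) atTop (𝓝 (Real.sqrt 0)) :=
      (Real.continuous_sqrt.tendsto 0).comp h1
    rw [Real.sqrt_zero] at this
    convert this using 2 with n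
    rw [← Real.sqrt_sq_eq_abs]
  exact (tendsto_zero_iff_abs_tendsto_zero _).mpr h2



theorem exists_Bfam (f : ℕ → E →L[ℝ] ℝ) (hf : ∀ n, ‖f n‖ ≤ 1)
    (β : F →ₗ[ℝ] F →ₗ[ℝ] ℝ) (hsymm : ∀ y y', β y y' = β y' y)
    (hpos : ∀ y, 0 ≤ β y y) (hβb : ∀ y, β y y ≤ ‖y‖^2)
    (w : ℕ → F) (r : ℝ) (hr : 0 < r)
    (horth : ∀ j k, β (w j) (w k) = if j = k then r else 0) :
    ∃ B : ellTwo → (E →L[ℝ] F →L[ℝ] ℝ),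
      (∀ h h', B (h+h') = B h + B h') ∧ (∀ (a:ℝ) h, B (a•h) = a • B h) ∧
      (∀ h, ‖B h‖ ≤ Real.sqrt r * ‖h‖) ∧
      (∀ n x y, B (lp.single 2 n (1:ℝ)) x y = f n x * β (w n) y) := by
  classical
  -- summability of squares of beta
  have hβsq : ∀ y : F, Summable fun n => (β (w n) y)^2 := by
    intro y
    apply summable_of_sum_range_le (c := r * β y y) (fun n => sq_nonneg _)
    intro n
    exact bessel β hsymm hpos w r hr horth y (Finset.range n)
  have habs : ∀ (h : ellTwo) (x : E) (y : F) (n : ℕ),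
      |h n * f n x * β (w n) y| ≤ ‖x‖ * (((h n)^2 + (β (w n) y)^2)/2) := by
    intro h x y n
    rw [abs_mul, abs_mul]
    have h1 : |f n x| ≤ ‖x‖ := by
      calc |f n x| = ‖f n x‖ := rfl
        _ ≤ ‖f n‖ * ‖x‖ := (f n).le_opNorm x
        _ ≤ 1 * ‖x‖ := by gcongr; exact hf n
        _ = ‖x‖ := one_mul _
    have h2 : |h n| * |β (w n) y| ≤ ((h n)^2 + (β (w n) y)^2)/2 := by
      nlinarith [sq_nonneg (|h n| - |β (w n) y|), sq_abs (h n), sq_abs (β (w n) y),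
        abs_nonneg (h n), abs_nonneg (β (w n) y)]
    calc |h n| * |f n x| * |β (w n) y| ≤ |h n| * ‖x‖ * |β (w n) y| := by
          apply mul_le_mul_of_nonneg_right _ (abs_nonneg _)
          exact mul_le_mul_of_nonneg_left h1 (abs_nonneg _)
      _ = ‖x‖ * (|h n| * |β (w n) y|) := by ring
      _ ≤ ‖x‖ * (((h n)^2 + (β (w n) y)^2)/2) :=
          mul_le_mul_of_nonneg_left h2 (norm_nonneg x)
  have hsummable : ∀ (h : ellTwo) (x : E) (y : F),
      Summable fun n => h n * f n x * β (w n) y := by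
    intro h x y
    apply Summable.of_norm
    apply Summable.of_nonneg_of_le (fun n => norm_nonneg _) (fun n => habs h x y n)
    apply Summable.mul_left
    exact ((ellTwo.summable_sq h).add (hβsq y)).div_const 2
  -- finite-sum Cauchy-Schwarz bound
  have hfin : ∀ (h : ellTwo) (x : E) (y : F) (s : Finset ℕ),
      ∑ n ∈ s, |h n * f n x * β (w n) y| ≤ Real.sqrt r * ‖h‖ * ‖x‖ * ‖y‖ := by
    intro h x y s
    set A := ∑ n ∈ s, |h n * f n x * β (w n) y| with hA
    have hA0 : 0 ≤ A := Finset.sum_nonneg (fun n _ => abs_nonneg _)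
    have hsq : A^2 ≤ (‖h‖^2 * ‖x‖^2) * (r * ‖y‖^2) := by
      have hcs := Finset.sum_mul_sq_le_sq_mul_sq s (fun n => |h n * f n x|)
        (fun n => |β (w n) y|)
      have he : ∀ n, |h n * f n x * β (w n) y| = |h n * f n x| * |β (w n) y| :=
        fun n => abs_mul _ _
      rw [hA]
      rw [Finset.sum_congr rfl (fun n _ => he n)]
      refine hcs.trans ?_
      have hb1 : ∑ n ∈ s, |h n * f n x|^2 ≤ ‖h‖^2 * ‖x‖^2 := by
        have : ∀ n ∈ s, |h n * f n x|^2 ≤ (h n)^2 * ‖x‖^2 := by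
          intro n _
          rw [sq_abs, mul_pow]
          apply mul_le_mul_of_nonneg_left _ (sq_nonneg _)
          have h1 : |f n x| ≤ ‖x‖ := by
            calc |f n x| = ‖f n x‖ := rfl
              _ ≤ ‖f n‖ * ‖x‖ := (f n).le_opNorm x
              _ ≤ 1 * ‖x‖ := by gcongr; exact hf n
              _ = ‖x‖ := one_mul _
          calc (f n x)^2 = |f n x|^2 := (sq_abs _).symm
            _ ≤ ‖x‖^2 := by
                apply pow_le_pow_left₀ (abs_nonneg _) h1
        calc ∑ n ∈ s, |h n * f n x|^2 ≤ ∑ n ∈ s, (h n)^2 * ‖x‖^2 :=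
              Finset.sum_le_sum this
          _ = (∑ n ∈ s, (h n)^2) * ‖x‖^2 := by rw [← Finset.sum_mul]
          _ ≤ ‖h‖^2 * ‖x‖^2 := by
              apply mul_le_mul_of_nonneg_right (ellTwo.sum_sq_le h s) (sq_nonneg _)
      have hb2 : ∑ n ∈ s, |β (w n) y|^2 ≤ r * ‖y‖^2 := by
        have e : ∀ n ∈ s, |β (w n) y|^2 = (β (w n) y)^2 := fun n _ => sq_abs _
        rw [Finset.sum_congr rfl e]
        refine (bessel β hsymm hpos w r hr horth y s).trans ?_
        exact mul_le_mul_of_nonneg_left (hβb y) hr.le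
      have h10 : (0:ℝ) ≤ ∑ n ∈ s, |h n * f n x|^2 :=
        Finset.sum_nonneg (fun n _ => sq_nonneg _)
      have h20 : (0:ℝ) ≤ ∑ n ∈ s, |β (w n) y|^2 :=
        Finset.sum_nonneg (fun n _ => sq_nonneg _)
      exact mul_le_mul hb1 hb2 h20 (by positivity)
    have hrhs : (‖h‖^2 * ‖x‖^2) * (r * ‖y‖^2) = (Real.sqrt r * ‖h‖ * ‖x‖ * ‖y‖)^2 := by
      rw [mul_pow, mul_pow, mul_pow, Real.sq_sqrt hr.le]
      ring
    rw [hrhs] at hsq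
    calc A = Real.sqrt (A^2) := by rw [Real.sqrt_sq hA0]
      _ ≤ Real.sqrt ((Real.sqrt r * ‖h‖ * ‖x‖ * ‖y‖)^2) := Real.sqrt_le_sqrt hsq
      _ = Real.sqrt r * ‖h‖ * ‖x‖ * ‖y‖ := Real.sqrt_sq (by positivity)
  have htsum_bound : ∀ (h : ellTwo) (x : E) (y : F),
      |∑' n, h n * f n x * β (w n) y| ≤ Real.sqrt r * ‖h‖ * ‖x‖ * ‖y‖ := by
    intro h x y
    have h1 : |∑' n, h n * f n x * β (w n) y| ≤ ∑' n, |h n * f n x * β (w n) y| := by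
      rw [← Real.norm_eq_abs]
      exact norm_tsum_le_tsum_norm (hsummable h x y).norm
    refine h1.trans ?_
    apply Summable.tsum_le_of_sum_le (hsummable h x y).abs
    exact hfin h x y
  -- build the bilinear map
  set Braw : ellTwo → F →ₗ[ℝ] E →ₗ[ℝ] ℝ := fun h => 0 with hBrawdummy
  set mkB : ellTwo → (E →L[ℝ] F →L[ℝ] ℝ) := fun h =>
    LinearMap.mkContinuous₂
      (LinearMap.mk₂ ℝ (fun x y => ∑' n, h n * f n x * β (w n) y)
        (fun x₁ x₂ y => by
          rw [← Summable.tsum_add (hsummable h x₁ y) (hsummable h x₂ y)]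
          apply tsum_congr
          intro n
          rw [map_add]
          ring)
        (fun a x y => by
          rw [smul_eq_mul, ← tsum_mul_left]
          apply tsum_congr
          intro n
          rw [_root_.map_smul, smul_eq_mul]
          ring)
        (fun x y₁ y₂ => by
          rw [← Summable.tsum_add (hsummable h x y₁) (hsummable h x y₂)]
          apply tsum_congr
          intro n
          rw [map_add]
          ring)
        (fun a x y => by
          rw [smul_eq_mul, ← tsum_mul_left]
          apply tsum_congr
          intro n
          rw [_root_.map_smul, smul_eq_mul]
          ring))
      (Real.sqrt r * ‖h‖)
      (fun x y => by
        rw [Real.norm_eq_abs]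
        have := htsum_bound h x y
        calc |∑' n, h n * f n x * β (w n) y| ≤ Real.sqrt r * ‖h‖ * ‖x‖ * ‖y‖ := this
          _ = Real.sqrt r * ‖h‖ * ‖x‖ * ‖y‖ := rfl) with hmkB
  have happly : ∀ h x y, mkB h x y = ∑' n, h n * f n x * β (w n) y := fun h x y => rfl
  refine ⟨mkB, ?_, ?_, ?_, ?_⟩
  · intro h h'
    apply ContinuousLinearMap.ext
    intro x
    apply ContinuousLinearMap.ext
    intro y
    show mkB (h + h') x y = mkB h x y + mkB h' x y
    rw [happly, happly, happly, ← Summable.tsum_add (hsummable h x y) (hsummable h' x y)]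
    apply tsum_congr
    intro n
    have hcoord : (h + h' : ellTwo) n = h n + h' n := by
      rw [lp.coeFn_add]; rfl
    rw [hcoord]
    ring
  · intro a h
    apply ContinuousLinearMap.ext
    intro x
    apply ContinuousLinearMap.ext
    intro y
    show mkB (a • h) x y = a * mkB h x y
    rw [happly, happly, ← tsum_mul_left]
    apply tsum_congr
    intro n
    have hcoord : (a • h : ellTwo) n = a * h n := by
      rw [lp.coeFn_smul]; rfl
    rw [hcoord]
    ring
  · intro h
    apply LinearMap.mkContinuous₂_norm_le
    positivity
  · intro n x y
    rw [happly]
    rw [tsum_eq_single n]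
    · have : (lp.single 2 n (1:ℝ) : ∀ _ : ℕ, ℝ) n = 1 := lp.single_apply_self 2 n 1
      rw [this]
      ring
    · intro m hm
      have : (lp.single 2 n (1:ℝ) : ∀ _ : ℕ, ℝ) m = 0 := lp.single_apply_ne 2 n 1 hm
      rw [this]
      ring



end EllTwo

end DPPaux

open DPPaux

/-- If `E` is not Schur, `F` contains a copy of `ℓ₁`, and every operator `E → F*` is
completely continuous, then `E ⊗̂π F` fails the Dunford–Pettis property. -/
theorem projectiveTensorProduct_not_dunfordPettis
    {E F X : Type*} [NormedAddCommGroup E] [NormedSpace ℝ E] [CompleteSpace E]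
    [NormedAddCommGroup F] [NormedSpace ℝ F] [CompleteSpace F]
    [NormedAddCommGroup X] [NormedSpace ℝ X] [CompleteSpace X]
    (h : ProjectiveTensorProduct X E F)
    (hE : ¬ SchurProperty E)
    (hF : ContainsCopy F ellOne)
    (hcc : ∀ T : E →L[ℝ] (F →L[ℝ] ℝ), CompletelyContinuous T) :
    ¬ DunfordPettisProperty X := by
  classical
  -- Step 1: a weakly null sequence with norms bounded below
  simp only [SchurProperty, not_forall] at hE
  obtain ⟨x0, hx0w, hx0n⟩ := hE
  rw [NormedAddCommGroup.tendsto_nhds_zero] at hx0n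
  push_neg at hx0n
  obtain ⟨ε, hε, hfreq⟩ := hx0n
  have hfreq' : ∃ᶠ n in atTop, ε ≤ ‖x0 n‖ := hfreq
  obtain ⟨ϕ, hϕmono, hϕ⟩ := Filter.extraction_of_frequently_atTop hfreq'
  set x' : ℕ → E := fun n => x0 (ϕ n) with hx'
  have hx'w : WeaklyNull x' := fun ψ => (hx0w ψ).comp hϕmono.tendsto_atTop
  have hx'ne : ∀ n, x' n ≠ 0 := by
    intro n hn
    have h2 := hϕ n
    have hn' : x0 (ϕ n) = 0 := hn
    rw [hn', norm_zero] at h2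
    linarith
  -- Step 2: norming functionals
  set f : ℕ → E →L[ℝ] ℝ := fun n => Classical.choose (exists_dual_vector ℝ (x' n) (norm_ne_zero_iff.mpr (hx'ne n)))
    with hfdef
  have hfspec : ∀ n, ‖f n‖ = 1 ∧ f n (x' n) = ‖x' n‖ := by
    intro n
    have := Classical.choose_spec (exists_dual_vector ℝ (x' n) (norm_ne_zero_iff.mpr (hx'ne n)))
    exact this
  -- Step 3: the ℓ¹ copy and β
  obtain ⟨i, c, hc, hci⟩ := hF
  obtain ⟨β, hsymm, hpos, hβb, horth⟩ := exists_beta i c hc hci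
  set w : ℕ → F := fun n => i (lp.single 1 n 1) with hwdef
  have hr : (0:ℝ) < c^2/2 := by positivity
  obtain ⟨B, hBadd, hBsmul, hBnorm, hBval⟩ := exists_Bfam f (fun n => (hfspec n).1.le)
    β hsymm hpos hβb w (c^2/2) hr horth
  -- Step 4: the weakly null sequence in X
  set u : ℕ → X := fun n => h.tmul (x' n) (w n) with hudef
  have hwbound : ∀ n, ‖w n‖ ≤ ‖i‖ := by
    intro n
    have h1 : ‖(lp.single 1 n 1 : ellOne)‖ = 1 := by
      have := lp.norm_single (p := 1) (E := fun _ : ℕ => ℝ) (by norm_num)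
        n (1:ℝ)
      simpa using this
    calc ‖i (lp.single 1 n 1)‖ ≤ ‖i‖ * ‖(lp.single 1 n 1 : ellOne)‖ := i.le_opNorm _
      _ = ‖i‖ := by rw [h1, mul_one]
  have hu : WeaklyNull u := by
    intro ψ
    set T : E →L[ℝ] (F →L[ℝ] ℝ) := ((ContinuousLinearMap.compL ℝ F X ℝ) ψ).comp h.tmul
      with hT
    have hTval : ∀ (x : E) (y : F), T x y = ψ (h.tmul x y) := fun x y => rfl
    have hTcc := hcc T x' 0 (fun φ' => by rw [map_zero]; exact hx'w φ')
    rw [map_zero] at hTcc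
    have hTn : Tendsto (fun n => ‖T (x' n)‖) atTop (𝓝 0) := by
      have := hTcc.norm
      rwa [norm_zero] at this
    refine squeeze_zero_norm (a := fun n => ‖T (x' n)‖ * ‖i‖) (fun n => ?_) ?_
    · calc ‖ψ (u n)‖ = ‖T (x' n) (w n)‖ := by rw [hTval]
        _ ≤ ‖T (x' n)‖ * ‖w n‖ := (T (x' n)).le_opNorm _
        _ ≤ ‖T (x' n)‖ * ‖i‖ := by
            apply mul_le_mul_of_nonneg_left (hwbound n) (norm_nonneg _)
    · have := hTn.mul_const ‖i‖
      rwa [zero_mul] at this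
  -- Step 5: the functionals on X
  have uniq : ∀ φ φ' : X →L[ℝ] ℝ, (∀ x y, φ (h.tmul x y) = φ' (h.tmul x y)) → φ = φ' := by
    intro φ φ' heq
    apply ContinuousLinearMap.ext_on h.dense_span
    rintro _ ⟨⟨x, y⟩, rfl⟩
    exact heq x y
  set Lam : ellTwo → (X →L[ℝ] ℝ) := fun hh => Classical.choose (h.lift (B hh)) with hLam
  have hLamspec : ∀ hh, ‖Lam hh‖ ≤ ‖B hh‖ ∧ ∀ x y, Lam hh (h.tmul x y) = B hh x y :=
    fun hh => Classical.choose_spec (h.lift (B hh))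
  have hLamadd : ∀ h₁ h₂, Lam (h₁ + h₂) = Lam h₁ + Lam h₂ := by
    intro h₁ h₂
    apply uniq
    intro x y
    rw [(hLamspec (h₁ + h₂)).2 x y, hBadd]
    show (B h₁ + B h₂) x y = (Lam h₁ + Lam h₂) (h.tmul x y)
    rw [ContinuousLinearMap.add_apply, ContinuousLinearMap.add_apply,
      ContinuousLinearMap.add_apply, (hLamspec h₁).2 x y, (hLamspec h₂).2 x y]
  have hLamsmul : ∀ (a : ℝ) hh, Lam (a • hh) = a • Lam hh := by
    intro a hh
    apply uniq
    intro x y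
    rw [(hLamspec (a • hh)).2 x y, hBsmul]
    show (a • B hh) x y = (a • Lam hh) (h.tmul x y)
    rw [ContinuousLinearMap.smul_apply, ContinuousLinearMap.smul_apply,
      ContinuousLinearMap.smul_apply, (hLamspec hh).2 x y]
  have hLambound : ∀ hh, ‖Lam hh‖ ≤ Real.sqrt (c^2/2) * ‖hh‖ :=
    fun hh => (hLamspec hh).1.trans (hBnorm hh)
  set LamL : ellTwo →ₗ[ℝ] (X →L[ℝ] ℝ) :=
    { toFun := Lam, map_add' := hLamadd, map_smul' := hLamsmul } with hLamL
  set LamC : ellTwo →L[ℝ] (X →L[ℝ] ℝ) :=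
    LamL.mkContinuous (Real.sqrt (c^2/2)) (fun hh => hLambound hh) with hLamC
  set φseq : ℕ → (X →L[ℝ] ℝ) := fun n => Lam (lp.single 2 n 1) with hφseq
  have hφw : WeaklyNull φseq := by
    intro Ξ
    have := ellTwo.weaklyNullSingle (Ξ.comp LamC)
    exact this
  -- Step 6: contradiction
  intro hDPP
  have hlim := hDPP u φseq hu hφw
  have hval : ∀ n, φseq n (u n) = ‖x' n‖ * (c^2/2) := by
    intro n
    show Lam (lp.single 2 n 1) (h.tmul (x' n) (w n)) = _
    rw [(hLamspec _).2, hBval, (hfspec n).2, horth]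
    simp
  have hlow : ∀ n, ε * (c^2/2) ≤ φseq n (u n) := by
    intro n
    rw [hval n]
    apply mul_le_mul_of_nonneg_right (hϕ n) hr.le
  have hevent := hlim.eventually (gt_mem_nhds (show (0:ℝ) < ε * (c^2/2) by positivity))
  obtain ⟨n, hn⟩ := hevent.exists
  exact absurd (hlow n) (not_le.mpr hn)
end

section
/- Let E be a Banach space without the Schur property, let 1 < p < ∞, suppose F is a Banach space admitting a bounded linear surjection onto ℓ_p, and suppose every bounded linear operator from E into F* is completely continuous. Then the projective tensor product E ⊗̂π F does not have the Dunford–Pettis property. -/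
/-!
Pick a weakly null sequence `bₙ` in `E` with `‖bₙ‖ ≥ ε`, norming functionals `gₙ`, and
uniformly bounded lifts `yₙ ∈ F` of the unit vectors of `ℓ_p`. Since every operator `E → F*` is
completely continuous, the tensors `bₙ ⊗ yₙ` are weakly null. The functionals `φₙ` representing
`(u, v) ↦ gₙ u · (q v)ₙ` are weakly null too: by Hölder, `‖∑_{n ∈ S} ±φₙ‖ ≤ ‖q‖ |S| ^ (1 - 1/p)`
grows sublinearly in `|S|`, so for `Φ ∈ X**` the values `|Φ φₙ|` cannot stay `≥ δ` infinitely often.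
Yet `φₙ (bₙ ⊗ yₙ) = ‖bₙ‖ ≥ ε`.
-/

open Filter Topology MeasureTheory

open Finset

lemma exists_weaklyNull_le_norm_of_not_schurProperty {E : Type*} [NormedAddCommGroup E]
    [NormedSpace ℝ E] (hE : ¬ SchurProperty E) :
    ∃ (b : ℕ → E) (ε : ℝ), 0 < ε ∧ WeaklyNull b ∧ ∀ n, ε ≤ ‖b n‖ := by
  simp only [SchurProperty, not_forall] at hE
  obtain ⟨a, ha, hna⟩ := hE
  rw [NormedAddGroup.tendsto_nhds_zero] at hna
  push Not at hna
  obtain ⟨ε, hε, hfreq⟩ := hna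
  obtain ⟨σ, hσ, hεσ⟩ := extraction_of_frequently_atTop hfreq
  exact ⟨a ∘ σ, ε, hε, fun φ => (ha φ).comp hσ.tendsto_atTop, hεσ⟩

lemma tendsto_zero_of_sum_abs_le_mul_card_rpow {c : ℕ → ℝ} {M s : ℝ} (hs : s < 1)
    (hc : ∀ S : Finset ℕ, ∑ n ∈ S, |c n| ≤ M * (#S : ℝ) ^ s) :
    Tendsto c atTop (𝓝 0) := by
  rw [NormedAddGroup.tendsto_nhds_zero]
  by_contra! hnot
  obtain ⟨δ, hδ, hfreq⟩ := hnot
  have hinf : {n | δ ≤ |c n|}.Infinite := Nat.frequently_atTop_iff_infinite.mp hfreq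
  -- `k` indices with `|c n| ≥ δ` force `k δ ≤ M k ^ s`, i.e. `k ^ (1 - s) ≤ M / δ`.
  have hbdd : ∀ k : ℕ, 0 < k → (k : ℝ) ^ (1 - s) ≤ M / δ := by
    intro k hk
    obtain ⟨S, hS, rfl⟩ := hinf.exists_subset_card_eq k
    have hk' : (0 : ℝ) < #S := by exact_mod_cast hk
    have hlow : (#S : ℝ) * δ ≤ M * (#S : ℝ) ^ s :=
      calc (#S : ℝ) * δ = ∑ _n ∈ S, δ := by rw [sum_const, nsmul_eq_mul]
        _ ≤ ∑ n ∈ S, |c n| := sum_le_sum fun n hn => hS hn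
        _ ≤ M * (#S : ℝ) ^ s := hc S
    rw [le_div_iff₀ hδ, Real.rpow_sub hk', Real.rpow_one, div_mul_eq_mul_div,
      div_le_iff₀ (Real.rpow_pos_of_pos hk' s)]
    linarith
  obtain ⟨k, hk⟩ := ((tendsto_rpow_atTop (sub_pos.mpr hs)).comp
    tendsto_natCast_atTop_atTop).eventually_gt_atTop (M / δ) |>.exists_forall_of_atTop
  exact (hk (k + 1) (by omega)).not_ge (hbdd (k + 1) k.succ_pos)

lemma weaklyNull_of_norm_sum_smul_le {Y : Type*} [NormedAddCommGroup Y] [NormedSpace ℝ Y]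
    {φ : ℕ → Y} {M s : ℝ} (hs : s < 1)
    (hφ : ∀ (S : Finset ℕ) (ξ : ℕ → ℝ), (∀ n, |ξ n| ≤ 1) →
      ‖∑ n ∈ S, ξ n • φ n‖ ≤ M * (#S : ℝ) ^ s) :
    WeaklyNull φ := by
  intro Φ
  refine tendsto_zero_of_sum_abs_le_mul_card_rpow (M := ‖Φ‖ * M) hs fun S => ?_
  have hsign : ∀ n, |(SignType.sign (Φ (φ n)) : ℝ)| ≤ 1 := fun n => by
    rcases SignType.sign (Φ (φ n)) with _ | _ | _ <;> simp
  calc ∑ n ∈ S, |Φ (φ n)| = Φ (∑ n ∈ S, (SignType.sign (Φ (φ n)) : ℝ) • φ n) := by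
        simp only [map_sum, map_smul, smul_eq_mul, sign_mul_self]
    _ ≤ ‖Φ‖ * ‖∑ n ∈ S, (SignType.sign (Φ (φ n)) : ℝ) • φ n‖ :=
        (le_abs_self _).trans (Φ.le_opNorm _)
    _ ≤ ‖Φ‖ * M * (#S : ℝ) ^ s := by
        rw [mul_assoc]; exact mul_le_mul_of_nonneg_left (hφ S _ hsign) (norm_nonneg Φ)

lemma lp.sum_abs_le_card_rpow_mul_norm {ι : Type*} {p : ENNReal} [Fact (1 ≤ p)] (hp : p ≠ ⊤)
    (f : lp (fun _ : ι => ℝ) p) (s : Finset ι) :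
    ∑ i ∈ s, |f i| ≤ (#s : ℝ) ^ (1 - p.toReal⁻¹) * ‖f‖ := by
  have hp1 : 1 ≤ p.toReal := by simpa using ENNReal.toReal_mono hp (Fact.out : 1 ≤ p)
  have hp0 : 0 < p.toReal := zero_lt_one.trans_le hp1
  have hpow : (#s : ℝ) ^ (p.toReal - 1) = ((#s : ℝ) ^ (1 - p.toReal⁻¹)) ^ p.toReal := by
    rw [← Real.rpow_mul (Nat.cast_nonneg _), sub_mul, inv_mul_cancel₀ hp0.ne', one_mul]
  rw [← Real.rpow_le_rpow_iff (sum_nonneg fun i _ => abs_nonneg _) (by positivity) hp0,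
    Real.mul_rpow (by positivity) (norm_nonneg f), ← hpow]
  calc (∑ i ∈ s, |f i|) ^ p.toReal ≤ (#s : ℝ) ^ (p.toReal - 1) * ∑ i ∈ s, |f i| ^ p.toReal :=
        Real.rpow_sum_le_const_mul_sum_rpow s _ hp1
    _ ≤ (#s : ℝ) ^ (p.toReal - 1) * ‖f‖ ^ p.toReal :=
        mul_le_mul_of_nonneg_left (lp.sum_rpow_le_norm_rpow hp0 f s) (by positivity)

lemma CompletelyContinuous.tendsto_zero_of_weaklyNull {E F : Type*} [NormedAddCommGroup E]
    [NormedSpace ℝ E] [NormedAddCommGroup F] [NormedSpace ℝ F] {T : E →L[ℝ] F}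
    (hT : CompletelyContinuous T) {b : ℕ → E} (hb : WeaklyNull b) :
    Tendsto (fun n => T (b n)) atTop (𝓝 0) := by
  simpa using hT b 0 fun φ => by simpa using hb φ

lemma WeaklyNull.bilinear_of_completelyContinuous {E F X : Type*} [NormedAddCommGroup E]
    [NormedSpace ℝ E] [NormedAddCommGroup F] [NormedSpace ℝ F] [NormedAddCommGroup X]
    [NormedSpace ℝ X] {b : ℕ → E} (hb : WeaklyNull b)
    (hcc : ∀ T : E →L[ℝ] (F →L[ℝ] ℝ), CompletelyContinuous T) (β : E →L[ℝ] F →L[ℝ] X)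
    {y : ℕ → F} {C : ℝ} (hy : ∀ n, ‖y n‖ ≤ C) :
    WeaklyNull fun n => β (b n) (y n) := by
  intro ψ
  set T : E →L[ℝ] F →L[ℝ] ℝ := (ContinuousLinearMap.compL ℝ F X ℝ ψ).comp β
  have hT : Tendsto (fun n => ‖T (b n)‖ * C) atTop (𝓝 0) := by
    simpa using ((hcc T).tendsto_zero_of_weaklyNull hb).norm.mul_const C
  refine squeeze_zero_norm (fun n => ?_) hT
  calc ‖ψ (β (b n) (y n))‖ = ‖T (b n) (y n)‖ := rfl
    _ ≤ ‖T (b n)‖ * ‖y n‖ := (T (b n)).le_opNorm _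
    _ ≤ ‖T (b n)‖ * C := mul_le_mul_of_nonneg_left (hy n) (norm_nonneg _)

lemma norm_sum_smul_smulRight_le {E F : Type*} [NormedAddCommGroup E] [NormedSpace ℝ E]
    [NormedAddCommGroup F] [NormedSpace ℝ F] {p : ENNReal} [Fact (1 ≤ p)] (hp : p ≠ ⊤)
    (q : F →L[ℝ] lp (fun _ : ℕ => ℝ) p) {g : ℕ → E →L[ℝ] ℝ} (hg : ∀ n, ‖g n‖ ≤ 1)
    (S : Finset ℕ) {ξ : ℕ → ℝ} (hξ : ∀ n, |ξ n| ≤ 1) :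
    ‖∑ n ∈ S, ξ n • (g n).smulRight ((lp.evalCLM ℝ (fun _ : ℕ => ℝ) p n).comp q)‖ ≤
      ‖q‖ * (#S : ℝ) ^ (1 - p.toReal⁻¹) := by
  refine ContinuousLinearMap.opNorm_le_bound₂ _ (by positivity) fun x y => ?_
  simp only [_root_.sum_apply, FunLike.coe_smul, Pi.smul_apply, smul_eq_mul,
    ContinuousLinearMap.smulRight_apply, ContinuousLinearMap.comp_apply, lp.evalCLM]
  calc ‖∑ n ∈ S, ξ n * (g n x • q y n)‖ ≤ ∑ n ∈ S, ‖x‖ * |q y n| := by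
        refine (norm_sum_le _ _).trans (sum_le_sum fun n _ => ?_)
        have hgx : |g n x| ≤ ‖x‖ := by simpa using (g n).le_of_opNorm_le (hg n) x
        simp only [norm_mul, smul_eq_mul, Real.norm_eq_abs]
        calc |ξ n| * (|g n x| * |q y n|) ≤ 1 * (‖x‖ * |q y n|) := by gcongr; exact hξ n
          _ = ‖x‖ * |q y n| := one_mul _
    _ ≤ ‖x‖ * ((#S : ℝ) ^ (1 - p.toReal⁻¹) * (‖q‖ * ‖y‖)) := by
        rw [← mul_sum]
        gcongr
        exact (lp.sum_abs_le_card_rpow_mul_norm hp (q y) S).trans (by gcongr; exact q.le_opNorm y)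
    _ = ‖q‖ * (#S : ℝ) ^ (1 - p.toReal⁻¹) * ‖x‖ * ‖y‖ := by ring

namespace ProjectiveTensorProduct

variable {X E F : Type*} [NormedAddCommGroup X] [NormedSpace ℝ X] [NormedAddCommGroup E]
  [NormedSpace ℝ E] [NormedAddCommGroup F] [NormedSpace ℝ F]

lemma norm_le_of_apply_tmul (h : ProjectiveTensorProduct X E F) {φ : X →L[ℝ] ℝ}
    {B : E →L[ℝ] F →L[ℝ] ℝ} (hφ : ∀ x y, φ (h.tmul x y) = B x y) : ‖φ‖ ≤ ‖B‖ := by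
  obtain ⟨ψ, hψB, hψ⟩ := h.lift B
  have hφψ : φ = ψ := by
    refine ContinuousLinearMap.ext_on h.dense_span ?_
    rintro _ ⟨⟨x, y⟩, rfl⟩
    exact (hφ x y).trans (hψ x y).symm
  exact hφψ ▸ hψB

lemma exists_weaklyNull_apply_tmul_eq_mul_coord (h : ProjectiveTensorProduct X E F)
    {p : ENNReal} [Fact (1 ≤ p)] (hp : p ≠ ⊤) (q : F →L[ℝ] lp (fun _ : ℕ => ℝ) p)
    {g : ℕ → E →L[ℝ] ℝ} (hg : ∀ n, ‖g n‖ ≤ 1) :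
    ∃ φ : ℕ → X →L[ℝ] ℝ, WeaklyNull φ ∧ ∀ n x y, φ n (h.tmul x y) = g n x * q y n := by
  set B : ℕ → E →L[ℝ] F →L[ℝ] ℝ :=
    fun n => (g n).smulRight ((lp.evalCLM ℝ (fun _ : ℕ => ℝ) p n).comp q)
  choose φ hφ using fun n => (h.lift (B n)).imp fun _ => And.right
  have hp0 : 0 < p.toReal := ENNReal.toReal_pos (zero_lt_one.trans_le Fact.out).ne' hp
  refine ⟨φ, weaklyNull_of_norm_sum_smul_le (M := ‖q‖) (s := 1 - p.toReal⁻¹)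
    (by linarith [inv_pos.mpr hp0]) fun S ξ hξ => ?_, hφ⟩
  refine (h.norm_le_of_apply_tmul (B := ∑ n ∈ S, ξ n • B n) fun x y => ?_).trans
    (norm_sum_smul_smulRight_le hp q hg S hξ)
  simp [hφ]

end ProjectiveTensorProduct

lemma not_dunfordPettisProperty_of_le_apply {X : Type*} [NormedAddCommGroup X] [NormedSpace ℝ X]
    {x : ℕ → X} {φ : ℕ → X →L[ℝ] ℝ} {ε : ℝ} (hx : WeaklyNull x) (hφ : WeaklyNull φ) (hε : 0 < ε)
    (hφx : ∀ n, ε ≤ φ n (x n)) : ¬ DunfordPettisProperty X := fun hDP =>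
  ((hDP x φ hx hφ).eventually (gt_mem_nhds hε)).exists.elim fun n hn => (hφx n).not_gt hn

theorem projectiveTensorProduct_not_dunfordPettis_of_surj_lp_general
    {E F X : Type*} [NormedAddCommGroup E] [NormedSpace ℝ E]
    [NormedAddCommGroup F] [NormedSpace ℝ F] [CompleteSpace F]
    [NormedAddCommGroup X] [NormedSpace ℝ X]
    (p : ENNReal) [Fact (1 ≤ p)] (hp₂ : p ≠ ⊤)
    (h : ProjectiveTensorProduct X E F)
    (hE : ¬ SchurProperty E)
    (hq : ∃ q : F →L[ℝ] lp (fun _ : ℕ => ℝ) p, Function.Surjective q)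
    (hcc : ∀ T : E →L[ℝ] (F →L[ℝ] ℝ), CompletelyContinuous T) :
    ¬ DunfordPettisProperty X := by
  obtain ⟨b, ε, hε, hb, hbε⟩ := exists_weaklyNull_le_norm_of_not_schurProperty hE
  choose g hg hgb using fun n => exists_dual_vector ℝ (b n) (hε.trans_le (hbε n)).ne'
  obtain ⟨q, hq⟩ := hq
  obtain ⟨C, -, hC⟩ := q.exists_preimage_norm_le hq
  choose y hqy hyC using fun n => hC (lp.single p n 1)
  have hy : ∀ n, ‖y n‖ ≤ C := fun n => by
    simpa [lp.norm_single (zero_lt_one.trans_le Fact.out)] using hyC n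
  obtain ⟨φ, hφ, hφb⟩ := h.exists_weaklyNull_apply_tmul_eq_mul_coord hp₂ q fun n => (hg n).le
  refine not_dunfordPettisProperty_of_le_apply
    (hb.bilinear_of_completelyContinuous hcc h.tmul hy) hφ hε fun n => ?_
  rw [hφb, hqy, hgb, lp.single_apply_self, mul_one]
  exact hbε n

/-- If `E` is not Schur, `F` has a quotient map onto `ℓ_p` (`1 < p < ∞`), and every operator
`E → F*` is completely continuous, then `E ⊗̂π F` fails the Dunford–Pettis property. -/
theorem projectiveTensorProduct_not_dunfordPettis_of_surj_lp
    {E F X : Type*} [NormedAddCommGroup E] [NormedSpace ℝ E] [CompleteSpace E]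
    [NormedAddCommGroup F] [NormedSpace ℝ F] [CompleteSpace F]
    [NormedAddCommGroup X] [NormedSpace ℝ X] [CompleteSpace X]
    (p : ENNReal) [Fact (1 ≤ p)] (hp₁ : 1 < p) (hp₂ : p ≠ ⊤)
    (h : ProjectiveTensorProduct X E F)
    (hE : ¬ SchurProperty E)
    (hq : ∃ q : F →L[ℝ] lp (fun _ : ℕ => ℝ) p, Function.Surjective q)
    (hcc : ∀ T : E →L[ℝ] (F →L[ℝ] ℝ), CompletelyContinuous T) :
    ¬ DunfordPettisProperty X :=
  projectiveTensorProduct_not_dunfordPettis_of_surj_lp_general p hp₂ h hE hq hcc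
end

section
/- Let F be a Banach space. If every bounded linear operator from L^1[0,1] into F* is completely continuous, then F contains no copy of ℓ1. -/
/-!
Suppose `e : ℓ₁ → F` satisfies `c ‖a‖ ≤ ‖e a‖` and let `rₖ` be the Rademacher functions. Since
`r₀, …, r_{m-1}` are constant on the dyadic intervals of length `2⁻ᵐ`, Hahn–Banach gives finitely
many functionals `Ψ_{m,j} ∈ F*` of norm `≤ 1/c` with `Ψ_{m,j} (e a) = ∑_{k<m} rₖ(j/2ᵐ) aₖ`.
Integrating `f ∈ L¹[0,1]` against `t ↦ Ψ_{m,⌊2ᵐ t⌋}` defines operators `Sₘ : L¹[0,1] → F*` of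
norm `≤ 1/c`, and a pointwise ultralimit of the `Sₘ` is an operator `T` with
`T rₙ (e δₙ) = ∫ rₙ² = 1` for every `n`. But `(rₙ)` is orthonormal in `L²`, hence weakly null in
`L¹`, so complete continuity of `T` would force `‖T rₙ‖ → 0`.
-/

open Filter Topology MeasureTheory

/-- The Banach space `L¹[0,1]`. -/
noncomputable abbrev LOneUnitInterval : Type :=
  Lp ℝ 1 ((volume : Measure ℝ).restrict (Set.Icc 0 1))

open scoped ENNReal

section FunctionalAnalysis

variable {E F : Type*} [NormedAddCommGroup E] [NormedSpace ℝ E]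
  [NormedAddCommGroup F] [NormedSpace ℝ F]

theorem WeaklyNull.map {x : ℕ → E} (hx : WeaklyNull x) (T : E →L[ℝ] F) :
    WeaklyNull fun n => T (x n) :=
  fun φ => hx (φ.comp T)

theorem CompletelyContinuous.tendsto_zero {T : E →L[ℝ] F} (hT : CompletelyContinuous T)
    {x : ℕ → E} (hx : WeaklyNull x) : Tendsto (fun n => T (x n)) atTop (𝓝 0) := by
  simpa using hT x 0 (by simpa using fun φ => hx φ)

theorem Orthonormal.weaklyNull {H : Type*} [NormedAddCommGroup H] [InnerProductSpace ℝ H]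
    [CompleteSpace H] {v : ℕ → H} (hv : Orthonormal ℝ v) : WeaklyNull v := by
  intro φ
  obtain ⟨h, rfl⟩ := (InnerProductSpace.toDual ℝ H).surjective φ
  have hsq : Tendsto (fun n => ‖inner ℝ (v n) h‖ ^ 2) atTop (𝓝 0) :=
    (hv.inner_products_summable (x := h)).tendsto_atTop_zero
  rw [tendsto_zero_iff_norm_tendsto_zero]
  simpa [real_inner_comm, Real.sqrt_sq_eq_abs] using hsq.sqrt

theorem exists_tendsto_ultrafilter_of_bound {ι : Type*} (𝒰 : Ultrafilter ι)
    (S : ι → E →L[ℝ] F →L[ℝ] ℝ) {C : ℝ} (hS : ∀ i f x, |S i f x| ≤ C * ‖f‖ * ‖x‖) :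
    ∃ T : E →L[ℝ] F →L[ℝ] ℝ, ∀ f x, Tendsto (fun i => S i f x) 𝒰 (𝓝 (T f x)) := by
  have hlim : ∀ f x, ∃ a, |a| ≤ C * ‖f‖ * ‖x‖ ∧ Tendsto (fun i => S i f x) 𝒰 (𝓝 a) := by
    intro f x
    refine (isCompact_Icc (a := -(C * ‖f‖ * ‖x‖))).ultrafilter_le_nhds (𝒰.map _) ?_
      |>.imp fun a ha => ⟨abs_le.2 ha.1, ha.2⟩
    exact tendsto_principal.2 (Eventually.of_forall fun i => abs_le.1 (hS i f x))
  choose B hB_le hB using hlim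
  have hB_eq {f x a} (h : Tendsto (fun i => S i f x) 𝒰 (𝓝 a)) : B f x = a :=
    tendsto_nhds_unique (hB f x) h
  refine ⟨LinearMap.mkContinuous₂ (LinearMap.mk₂ ℝ B ?_ ?_ ?_ ?_) C hB_le, hB⟩
  · intro f f' x
    exact hB_eq (by simpa using (hB f x).add (hB f' x))
  · intro r f x
    exact hB_eq (by simpa using (hB f x).const_mul r)
  · intro f x x'
    exact hB_eq (by simpa using (hB f x).add (hB f x'))
  · intro r f x
    exact hB_eq (by simpa using (hB f x).const_mul r)

theorem exists_extension_norm_le_div (e : E →L[ℝ] F) {c : ℝ} (hc : 0 < c)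
    (he : ∀ x, c * ‖x‖ ≤ ‖e x‖) (φ : E →L[ℝ] ℝ) :
    ∃ ψ : F →L[ℝ] ℝ, ‖ψ‖ ≤ ‖φ‖ / c ∧ ∀ x, ψ (e x) = φ x := by
  have he_inj : Function.Injective e := by
    refine (injective_iff_map_eq_zero e).2 fun x hx => norm_eq_zero.1 ?_
    have := he x
    rw [hx, norm_zero] at this
    nlinarith [norm_nonneg x]
  let eR := LinearEquiv.ofInjective (e : E →ₗ[ℝ] F) he_inj
  have hbound : ∀ y, ‖φ (eR.symm y)‖ ≤ ‖φ‖ / c * ‖y‖ := by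
    intro y
    have hy : c * ‖eR.symm y‖ ≤ ‖y‖ :=
      (he _).trans_eq (congrArg norm (LinearEquiv.ofInjective_symm_apply (e : E →ₗ[ℝ] F) y))
    calc ‖φ (eR.symm y)‖ ≤ ‖φ‖ * ‖eR.symm y‖ := φ.le_opNorm _
      _ ≤ ‖φ‖ * (‖y‖ / c) := by gcongr; rwa [le_div_iff₀ hc, mul_comm]
      _ = ‖φ‖ / c * ‖y‖ := by ring
  obtain ⟨ψ, hψ, hψ_norm⟩ := exists_extension_norm_eq _
    ((φ.toLinearMap.comp eR.symm.toLinearMap).mkContinuous _ hbound)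
  refine ⟨ψ, hψ_norm ▸ LinearMap.mkContinuous_norm_le _ (by positivity) _, fun x => ?_⟩
  simpa [eR] using hψ (eR x)

theorem exists_clm_apply_apply_eq_integral_mul {Ω : Type*} [MeasurableSpace Ω] {μ : Measure Ω}
    (g : Ω → F →L[ℝ] ℝ)
    (hg : ∀ x, AEStronglyMeasurable (fun t => g t x) μ) {C : ℝ} (hC : ∀ t, ‖g t‖ ≤ C) :
    ∃ S : Lp ℝ 1 μ →L[ℝ] F →L[ℝ] ℝ,
      (∀ f x, S f x = ∫ t, f t * g t x ∂μ) ∧ ∀ f x, |S f x| ≤ C * ‖f‖ * ‖x‖ := by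
  have hgx (x : F) (t : Ω) : ‖g t x‖ ≤ C * ‖x‖ := (g t).le_of_opNorm_le (hC t) x
  have hint (f : Lp ℝ 1 μ) (x : F) : Integrable (fun t => f t * g t x) μ :=
    (L1.integrable_coeFn f).mul_bdd (hg x) (ae_of_all _ (hgx x))
  have hbound (f : Lp ℝ 1 μ) (x : F) : |∫ t, f t * g t x ∂μ| ≤ C * ‖f‖ * ‖x‖ := by
    rw [← Real.norm_eq_abs]
    calc ‖∫ t, f t * g t x ∂μ‖ ≤ ∫ t, ‖f t‖ * (C * ‖x‖) ∂μ :=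
          norm_integral_le_of_norm_le ((L1.integrable_coeFn f).norm.mul_const _)
            (ae_of_all _ fun t => by rw [norm_mul]; gcongr; exact hgx x t)
      _ = C * ‖f‖ * ‖x‖ := by rw [integral_mul_const, ← L1.norm_eq_integral_norm]; ring
  refine ⟨LinearMap.mkContinuous₂ (LinearMap.mk₂ ℝ (fun f x => ∫ t, f t * g t x ∂μ)
    ?_ ?_ ?_ ?_) C hbound, fun f x => rfl, hbound⟩
  · intro f f' x
    rw [← integral_add (hint f x) (hint f' x)]
    refine integral_congr_ae ?_
    filter_upwards [Lp.coeFn_add f f'] with t ht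
    rw [ht, Pi.add_apply, add_mul]
  · intro r f x
    rw [smul_eq_mul, ← integral_const_mul]
    refine integral_congr_ae ?_
    filter_upwards [Lp.coeFn_smul r f] with t ht
    rw [ht, Pi.smul_apply, smul_eq_mul, mul_assoc]
  · intro f x x'
    simp only [map_add, mul_add]
    exact integral_add (hint f x) (hint f x')
  · intro r f x
    simp only [map_smul, smul_eq_mul, ← integral_const_mul]
    congr 1 with t
    ring

end FunctionalAnalysis

section Inclusion

variable {α E : Type*} [MeasurableSpace α] {μ : Measure α} [IsProbabilityMeasure μ]
  [NormedAddCommGroup E] [NormedSpace ℝ E] {p q : ℝ≥0∞} [Fact (1 ≤ p)] [Fact (1 ≤ q)]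

noncomputable def Lp.inclusionOfLE (hpq : p ≤ q) : Lp E q μ →L[ℝ] Lp E p μ :=
  LinearMap.mkContinuous
    { toFun := fun f => ⟨f, Lp.mem_Lp_iff_memLp.2 ((Lp.memLp f).mono_exponent hpq)⟩
      map_add' := fun _ _ => rfl
      map_smul' := fun _ _ => rfl } 1 fun f => by
    rw [one_mul]
    exact ENNReal.toReal_mono (Lp.eLpNorm_ne_top f)
      (eLpNorm_le_eLpNorm_of_exponent_le hpq (Lp.aestronglyMeasurable f))

theorem Lp.coeFn_inclusionOfLE (hpq : p ≤ q) (f : Lp E q μ) :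
    ⇑(Lp.inclusionOfLE hpq f) = f :=
  rfl

end Inclusion

theorem sum_abs_le_norm_ellOne (a : ellOne) (s : Finset ℕ) : ∑ k ∈ s, |a k| ≤ ‖a‖ := by
  simpa using lp.sum_rpow_le_norm_rpow (p := 1) zero_lt_one a s

theorem sum_mul_single_ellOne {m n : ℕ} (hn : n < m) (s : ℕ → ℝ) :
    ∑ k ∈ Finset.range m, s k * (lp.single 1 n 1 : ellOne) k = s n := by
  rw [Finset.sum_eq_single_of_mem n (Finset.mem_range.2 hn) fun k _ hk => by
    rw [lp.single_apply_ne 1 n 1 hk, mul_zero], lp.single_apply_self, mul_one]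

theorem exists_dual_apply_eq_sum {F : Type*} [NormedAddCommGroup F] [NormedSpace ℝ F]
    (e : ellOne →L[ℝ] F) {c : ℝ} (hc : 0 < c) (he : ∀ a, c * ‖a‖ ≤ ‖e a‖) (m : ℕ)
    (s : ℕ → ℝ) (hs : ∀ k, |s k| ≤ 1) :
    ∃ ψ : F →L[ℝ] ℝ, ‖ψ‖ ≤ 1 / c ∧ ∀ a, ψ (e a) = ∑ k ∈ Finset.range m, s k * a k := by
  let φ : ellOne →L[ℝ] ℝ := ∑ k ∈ Finset.range m, s k • lp.evalCLM ℝ (fun _ => ℝ) 1 k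
  have hφ_apply (a : ellOne) : φ a = ∑ k ∈ Finset.range m, s k * a k := by
    simp [φ, lp.evalCLM]
  have hφ : ‖φ‖ ≤ 1 := by
    refine φ.opNorm_le_bound zero_le_one fun a => ?_
    rw [hφ_apply, one_mul, Real.norm_eq_abs]
    calc |∑ k ∈ Finset.range m, s k * a k| ≤ ∑ k ∈ Finset.range m, |a k| :=
          (Finset.abs_sum_le_sum_abs _ _).trans <| Finset.sum_le_sum fun k _ => by
            rw [abs_mul]; exact mul_le_of_le_one_left (abs_nonneg _) (hs k)
      _ ≤ ‖a‖ := sum_abs_le_norm_ellOne a _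
  obtain ⟨ψ, hψ, hψe⟩ := exists_extension_norm_le_div e hc he φ
  exact ⟨ψ, hψ.trans (by gcongr), fun a => (hψe a).trans (hφ_apply a)⟩

noncomputable def rademacher (n : ℕ) (t : ℝ) : ℝ := (-1) ^ ⌊2 ^ (n + 1) * t⌋₊

theorem abs_rademacher (n : ℕ) (t : ℝ) : |rademacher n t| = 1 := by
  simp [rademacher]

theorem rademacher_mul_self (n : ℕ) (t : ℝ) : rademacher n t * rademacher n t = 1 := by
  rw [← abs_mul_abs_self, abs_rademacher, one_mul]

theorem measurable_rademacher (n : ℕ) : Measurable (rademacher n) :=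
  measurable_from_nat.comp ((measurable_const_mul _).nat_floor)

theorem rademacher_natFloor_div {k m : ℕ} (hkm : k < m) (t : ℝ) :
    rademacher k (⌊2 ^ m * t⌋₊ / 2 ^ m) = rademacher k t := by
  obtain ⟨d, rfl⟩ := Nat.exists_eq_add_of_lt hkm
  have h2 : (2 : ℝ) ^ (k + d + 1) = 2 ^ (k + 1) * (2 ^ d : ℕ) := by push_cast; ring
  have hlhs : 2 ^ (k + 1) * ((⌊2 ^ (k + d + 1) * t⌋₊ : ℝ) / 2 ^ (k + d + 1)) =
      (⌊2 ^ (k + d + 1) * t⌋₊ : ℝ) / (2 ^ d : ℕ) := by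
    rw [h2]; field_simp
  have hrhs : 2 ^ (k + 1) * t = 2 ^ (k + d + 1) * t / (2 ^ d : ℕ) := by
    rw [h2]; field_simp
  rw [rademacher, rademacher, hlhs, hrhs, Nat.floor_div_eq_div, Nat.floor_div_natCast]

theorem rademacher_succ_div_two (n : ℕ) (t : ℝ) : rademacher (n + 1) (t / 2) = rademacher n t := by
  rw [rademacher, rademacher, pow_succ, mul_assoc, mul_div_cancel₀ t two_ne_zero]

theorem rademacher_succ_div_two_add_half (n : ℕ) {t : ℝ} (ht : 0 ≤ t) :
    rademacher (n + 1) (t / 2 + 1 / 2) = rademacher n t := by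
  have h : 2 ^ (n + 1 + 1) * (t / 2 + 1 / 2) = 2 ^ (n + 1) * t + (2 ^ (n + 1) : ℕ) := by
    push_cast; ring
  rw [rademacher, rademacher, h, Nat.floor_add_natCast (by positivity), pow_add,
    (Nat.even_pow.2 ⟨even_two, n.succ_ne_zero⟩).neg_one_pow, mul_one]

theorem rademacher_zero_div_two_add_half {t : ℝ} (ht : 0 ≤ t) :
    rademacher 0 (t / 2 + 1 / 2) = -rademacher 0 (t / 2) := by
  have h : 2 ^ (0 + 1) * (t / 2 + 1 / 2) = 2 ^ (0 + 1) * (t / 2) + (1 : ℕ) := by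
    push_cast; ring
  rw [rademacher, rademacher, h, Nat.floor_add_natCast (by positivity), pow_succ, mul_neg_one]

theorem intervalIntegral_zero_one_eq_half_add (g : ℝ → ℝ) (hg : IntervalIntegrable g volume 0 1) :
    ∫ t in (0 : ℝ)..1, g t =
      ((∫ t in (0 : ℝ)..1, g (t / 2)) + ∫ t in (0 : ℝ)..1, g (t / 2 + 1 / 2)) / 2 := by
  have hhalf : (1 / 2 : ℝ) ∈ Set.uIcc 0 1 := by norm_num [Set.mem_uIcc]
  rw [intervalIntegral.integral_comp_div g two_ne_zero,
    intervalIntegral.integral_comp_div_add g two_ne_zero, zero_div, zero_add, add_halves,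
    ← intervalIntegral.integral_add_adjacent_intervals
      (hg.mono_set (Set.uIcc_subset_uIcc_left hhalf))
      (hg.mono_set (Set.uIcc_subset_uIcc_right hhalf))]
  simp only [smul_eq_mul]
  ring

theorem intervalIntegrable_rademacher_mul (n k : ℕ) :
    IntervalIntegrable (fun t => rademacher n t * rademacher k t) volume 0 1 :=
  (intervalIntegrable_const (c := (1 : ℝ))).mono_fun
    ((measurable_rademacher n).mul (measurable_rademacher k)).aestronglyMeasurable
    (ae_of_all _ fun t => by simp [abs_rademacher])

/- On each half of `[0, 1]`, `rₙ₊₁` is a rescaled copy of `rₙ`; `r₀` is `1` on the first half and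
`-1` on the second, so the two halves cancel when `k = 0` and the index drops by one otherwise. -/
theorem intervalIntegral_rademacher_mul_of_lt :
    ∀ {k n : ℕ}, k < n → ∫ t in (0 : ℝ)..1, rademacher n t * rademacher k t = 0
  | 0, n + 1, _ => by
    have hflip :
        ∫ t in (0 : ℝ)..1, rademacher (n + 1) (t / 2 + 1 / 2) * rademacher 0 (t / 2 + 1 / 2) =
          -∫ t in (0 : ℝ)..1, rademacher (n + 1) (t / 2) * rademacher 0 (t / 2) := by
      rw [← intervalIntegral.integral_neg]
      refine intervalIntegral.integral_congr fun t ht => ?_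
      have ht0 : 0 ≤ t := by rw [Set.uIcc_of_le zero_le_one] at ht; exact ht.1
      simp only [rademacher_succ_div_two_add_half n ht0, rademacher_zero_div_two_add_half ht0,
        rademacher_succ_div_two, mul_neg]
    rw [intervalIntegral_zero_one_eq_half_add _ (intervalIntegrable_rademacher_mul _ _), hflip]
    ring
  | k + 1, n + 1, h => by
    have hhalf : ∫ t in (0 : ℝ)..1, rademacher (n + 1) (t / 2 + 1 / 2) *
        rademacher (k + 1) (t / 2 + 1 / 2) = 0 := by
      refine .trans (intervalIntegral.integral_congr fun t ht => ?_)
        (intervalIntegral_rademacher_mul_of_lt (Nat.lt_of_succ_lt_succ h))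
      have ht0 : 0 ≤ t := by rw [Set.uIcc_of_le zero_le_one] at ht; exact ht.1
      simp only [rademacher_succ_div_two_add_half _ ht0]
    rw [intervalIntegral_zero_one_eq_half_add _ (intervalIntegrable_rademacher_mul _ _), hhalf]
    simp only [rademacher_succ_div_two]
    rw [intervalIntegral_rademacher_mul_of_lt (Nat.lt_of_succ_lt_succ h)]
    ring

local notation "μ₀₁" => Measure.restrict (volume : Measure ℝ) (Set.Icc (0 : ℝ) 1)

instance : IsProbabilityMeasure μ₀₁ := ⟨by simp⟩

theorem integral_rademacher_mul_self (n : ℕ) : ∫ t, rademacher n t * rademacher n t ∂μ₀₁ = 1 := by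
  simp [rademacher_mul_self]

theorem integral_rademacher_mul_of_ne {n k : ℕ} (h : n ≠ k) :
    ∫ t, rademacher n t * rademacher k t ∂μ₀₁ = 0 := by
  rw [integral_Icc_eq_integral_Ioc, ← intervalIntegral.integral_of_le zero_le_one]
  rcases h.lt_or_gt with h | h
  · simp_rw [mul_comm (rademacher n _), intervalIntegral_rademacher_mul_of_lt h]
  · exact intervalIntegral_rademacher_mul_of_lt h

theorem memLp_rademacher (n : ℕ) (p : ℝ≥0∞) : MemLp (rademacher n) p μ₀₁ :=
  .of_bound (measurable_rademacher n).aestronglyMeasurable 1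
    (ae_of_all _ fun t => (abs_rademacher n t).le)

noncomputable def rademacherL1 (n : ℕ) : LOneUnitInterval := (memLp_rademacher n 1).toLp

noncomputable def rademacherL2 (n : ℕ) : Lp ℝ 2 μ₀₁ := (memLp_rademacher n 2).toLp

theorem orthonormal_rademacherL2 : Orthonormal ℝ rademacherL2 := by
  rw [orthonormal_iff_ite]
  intro n k
  have hinner : inner ℝ (rademacherL2 n) (rademacherL2 k) =
      ∫ t, rademacher n t * rademacher k t ∂μ₀₁ := by
    rw [MeasureTheory.L2.inner_def]
    refine integral_congr_ae ?_
    filter_upwards [(memLp_rademacher n 2).coeFn_toLp, (memLp_rademacher k 2).coeFn_toLp]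
      with t hn hk
    simp [rademacherL2, hn, hk, mul_comm]
  split_ifs with h
  · exact hinner.trans (h ▸ integral_rademacher_mul_self n)
  · exact hinner.trans (integral_rademacher_mul_of_ne h)

theorem weaklyNull_rademacherL1 : WeaklyNull rademacherL1 := by
  have hincl (n : ℕ) : Lp.inclusionOfLE one_le_two (rademacherL2 n) = rademacherL1 n := by
    refine Lp.ext ?_
    rw [Lp.coeFn_inclusionOfLE]
    exact (memLp_rademacher n 2).coeFn_toLp.trans (memLp_rademacher n 1).coeFn_toLp.symm
  simpa only [hincl] using orthonormal_rademacherL2.weaklyNull.map (Lp.inclusionOfLE one_le_two)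

theorem exists_clm_rademacherL1_apply_single_eq_one {F : Type*} [NormedAddCommGroup F]
    [NormedSpace ℝ F] (e : ellOne →L[ℝ] F) {c : ℝ} (hc : 0 < c) (he : ∀ a, c * ‖a‖ ≤ ‖e a‖) :
    ∃ T : LOneUnitInterval →L[ℝ] F →L[ℝ] ℝ, ∀ n, T (rademacherL1 n) (e (lp.single 1 n 1)) = 1 := by
  choose Ψ hΨ_norm hΨ using fun m j : ℕ => exists_dual_apply_eq_sum e hc he m
    (fun k => rademacher k (j / 2 ^ m)) fun k => (abs_rademacher _ _).le
  choose S hS hS_le using fun m => exists_clm_apply_apply_eq_integral_mul (μ := μ₀₁)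
    (fun t => Ψ m ⌊2 ^ m * t⌋₊)
    (fun x => (measurable_from_nat (f := fun j => Ψ m j x)).comp
      (measurable_const_mul _).nat_floor |>.aestronglyMeasurable)
    fun t => hΨ_norm m _
  obtain ⟨T, hT⟩ := exists_tendsto_ultrafilter_of_bound (Ultrafilter.of atTop) S hS_le
  refine ⟨T, fun n => tendsto_nhds_unique (hT _ _) (tendsto_const_nhds.congr' ?_)⟩
  filter_upwards [Ultrafilter.of_le atTop (eventually_gt_atTop n)] with m hm
  rw [hS]
  refine (integral_rademacher_mul_self n).symm.trans (integral_congr_ae ?_)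
  filter_upwards [(memLp_rademacher n 1).coeFn_toLp] with t ht
  rw [hΨ, sum_mul_single_ellOne hm, rademacher_natFloor_div hm, rademacherL1, ht]

theorem not_containsCopy_ellOne_of_forall_completelyContinuous_general
    {F : Type*} [NormedAddCommGroup F] [NormedSpace ℝ F]
    (hcc : ∀ T : LOneUnitInterval →L[ℝ] (F →L[ℝ] ℝ), CompletelyContinuous T) :
    ¬ ContainsCopy F ellOne := by
  rintro ⟨e, c, hc, he⟩
  obtain ⟨T, hT⟩ := exists_clm_rademacherL1_apply_single_eq_one e hc he
  have hT_lim := (hcc T).tendsto_zero weaklyNull_rademacherL1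
  have h_lim : Tendsto (fun n => T (rademacherL1 n) (e (lp.single 1 n 1))) atTop (𝓝 0) := by
    refine squeeze_zero_norm (fun n => ?_) (by simpa using (hT_lim.norm.mul_const ‖e‖))
    calc ‖T (rademacherL1 n) (e (lp.single 1 n 1))‖
        ≤ ‖T (rademacherL1 n)‖ * (‖e‖ * ‖(lp.single 1 n 1 : ellOne)‖) :=
          (T _).le_of_opNorm_le_of_le le_rfl (e.le_opNorm _)
      _ = ‖T (rademacherL1 n)‖ * ‖e‖ := by rw [lp.norm_single zero_lt_one, norm_one, mul_one]
  simp only [hT] at h_lim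
  exact one_ne_zero (tendsto_nhds_unique tendsto_const_nhds h_lim)

/-- If every bounded operator from `L¹[0,1]` into `F*` is completely continuous, then `F`
contains no copy of `ℓ₁`. -/
theorem not_containsCopy_ellOne_of_forall_completelyContinuous
    {F : Type*} [NormedAddCommGroup F] [NormedSpace ℝ F] [CompleteSpace F]
    (hcc : ∀ T : LOneUnitInterval →L[ℝ] (F →L[ℝ] ℝ), CompletelyContinuous T) :
    ¬ ContainsCopy F ellOne :=
  not_containsCopy_ellOne_of_forall_completelyContinuous_general hcc
end

section
/- Let E be a Banach space. If every bounded linear operator from E into (L^1[0,1])* is completely continuous, then E has the Schur property. -/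
open Filter Topology MeasureTheory

/-! The maps `f ↦ ∫_{Iₖ} f` over the disjoint intervals `Iₖ = (2⁻ᵏ⁻¹, 2⁻ᵏ]` present `ℓ¹` as a
quotient of `L¹[0,1]`, the normalised indicators of the `Iₙ` lifting its unit vectors. Given a
weakly null sequence `(xₙ)` in `E` and norming functionals `φₙ` of the `xₙ`, the operator
`T e = (f ↦ ∑ₖ φₖ(e) ∫_{Iₖ} f)` from `E` to `(L¹[0,1])*` pairs the bounded sequence `(φₖ(e))`
with an `ℓ¹` sequence, and testing `T xₙ` on the `n`-th indicator gives `‖xₙ‖ ≤ ‖T xₙ‖`.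
Complete continuity of `T` makes the right side tend to `0`. -/

open Set Function
open scoped ENNReal

section SequencePairing

variable {E F : Type*} [NormedAddCommGroup E] [NormedSpace ℝ E]
  [NormedAddCommGroup F] [NormedSpace ℝ F] {φ : ℕ → E →L[ℝ] ℝ} {ψ : ℕ → F →L[ℝ] ℝ}

lemma abs_mul_apply_le (hφ : ∀ k, ‖φ k‖ ≤ 1) (k : ℕ) (e : E) (f : F) :
    |φ k e * ψ k f| ≤ ‖e‖ * |ψ k f| := by
  rw [abs_mul]
  gcongr
  simpa using (φ k).le_of_opNorm_le (hφ k) e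

lemma summable_mul_apply (hφ : ∀ k, ‖φ k‖ ≤ 1)
    (hψ : ∀ (f : F) (u : Finset ℕ), ∑ k ∈ u, |ψ k f| ≤ ‖f‖) (e : E) (f : F) :
    Summable fun k => φ k e * ψ k f :=
  ((summable_of_sum_le (fun _ => abs_nonneg _) (hψ f)).mul_left ‖e‖).of_norm_bounded
    (abs_mul_apply_le hφ · e f)

lemma norm_tsum_mul_apply_le (hφ : ∀ k, ‖φ k‖ ≤ 1)
    (hψ : ∀ (f : F) (u : Finset ℕ), ∑ k ∈ u, |ψ k f| ≤ ‖f‖) (e : E) (f : F) :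
    ‖∑' k, φ k e * ψ k f‖ ≤ ‖e‖ * ‖f‖ := by
  have hsum : Summable fun k => |ψ k f| := summable_of_sum_le (fun _ => abs_nonneg _) (hψ f)
  calc ‖∑' k, φ k e * ψ k f‖ ≤ ∑' k, |φ k e * ψ k f| :=
        norm_tsum_le_tsum_norm (summable_mul_apply hφ hψ e f).norm
    _ ≤ ∑' k, ‖e‖ * |ψ k f| :=
        Summable.tsum_le_tsum (abs_mul_apply_le hφ · e f) (summable_mul_apply hφ hψ e f).abs
          (hsum.mul_left _)
    _ = ‖e‖ * ∑' k, |ψ k f| := tsum_mul_left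
    _ ≤ ‖e‖ * ‖f‖ := by
        gcongr
        exact Real.tsum_le_of_sum_le (fun _ => abs_nonneg _) (hψ f)

noncomputable def tsumMulCLM (hφ : ∀ k, ‖φ k‖ ≤ 1)
    (hψ : ∀ (f : F) (u : Finset ℕ), ∑ k ∈ u, |ψ k f| ≤ ‖f‖) : E →L[ℝ] F →L[ℝ] ℝ :=
  LinearMap.mkContinuous₂
    (LinearMap.mk₂ ℝ (fun e f => ∑' k, φ k e * ψ k f)
      (fun e e' f => by
        simp only [map_add, add_mul]
        exact (summable_mul_apply hφ hψ e f).tsum_add (summable_mul_apply hφ hψ e' f))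
      (fun c e f => by
        simp only [map_smul, smul_eq_mul, mul_assoc]
        exact tsum_mul_left)
      (fun e f f' => by
        simp only [map_add, mul_add]
        exact (summable_mul_apply hφ hψ e f).tsum_add (summable_mul_apply hφ hψ e f'))
      (fun c e f => by
        simp only [map_smul, smul_eq_mul, mul_left_comm _ c]
        exact tsum_mul_left))
    1 (fun e f => by rw [one_mul]; exact norm_tsum_mul_apply_le hφ hψ e f)

lemma tsumMulCLM_apply (hφ : ∀ k, ‖φ k‖ ≤ 1)
    (hψ : ∀ (f : F) (u : Finset ℕ), ∑ k ∈ u, |ψ k f| ≤ ‖f‖) (e : E) (f : F) :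
    tsumMulCLM hφ hψ e f = ∑' k, φ k e * ψ k f :=
  rfl

lemma abs_apply_le_norm_tsumMulCLM (hφ : ∀ k, ‖φ k‖ ≤ 1)
    (hψ : ∀ (f : F) (u : Finset ℕ), ∑ k ∈ u, |ψ k f| ≤ ‖f‖) {g : ℕ → F} (hg : ∀ n, ‖g n‖ ≤ 1)
    (hψg : ∀ k n, ψ k (g n) = if k = n then 1 else 0) (n : ℕ) (e : E) :
    |φ n e| ≤ ‖tsumMulCLM hφ hψ e‖ :=
  calc |φ n e| = ‖tsumMulCLM hφ hψ e (g n)‖ := by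
        rw [tsumMulCLM_apply, tsum_eq_single n fun k hk => by simp [hψg, hk], hψg, if_pos rfl,
          mul_one, Real.norm_eq_abs]
    _ ≤ ‖tsumMulCLM hφ hψ e‖ * ‖g n‖ := (tsumMulCLM hφ hψ e).le_opNorm _
    _ ≤ ‖tsumMulCLM hφ hψ e‖ := mul_le_of_le_one_right (norm_nonneg _) (hg n)

end SequencePairing

theorem SchurProperty.of_forall_completelyContinuous_into_dual
    {E F : Type*} [NormedAddCommGroup E] [NormedSpace ℝ E] [NormedAddCommGroup F] [NormedSpace ℝ F]
    (ψ : ℕ → F →L[ℝ] ℝ) (g : ℕ → F) (hψ : ∀ (f : F) (u : Finset ℕ), ∑ k ∈ u, |ψ k f| ≤ ‖f‖)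
    (hg : ∀ n, ‖g n‖ ≤ 1) (hψg : ∀ k n, ψ k (g n) = if k = n then 1 else 0)
    (hcc : ∀ T : E →L[ℝ] (F →L[ℝ] ℝ), CompletelyContinuous T) : SchurProperty E := by
  intro x hx
  choose φ hφ hφx using fun n => exists_dual_vector'' ℝ (x n)
  have hTx : Tendsto (fun n => tsumMulCLM hφ hψ (x n)) atTop (𝓝 0) := by
    simpa using hcc (tsumMulCLM hφ hψ) x 0 fun φ => by simpa using hx φ
  refine squeeze_zero_norm (fun n => ?_) (tendsto_zero_iff_norm_tendsto_zero.1 hTx)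
  calc ‖x n‖ = |φ n (x n)| := by simp [hφx]
    _ ≤ _ := abs_apply_le_norm_tsumMulCLM hφ hψ hg hψg n (x n)

section LOne

variable {α : Type*} [MeasurableSpace α] {μ : Measure α}

variable (μ) in
noncomputable def setIntegralCLM (s : Set α) : (α →₁[μ] ℝ) →L[ℝ] ℝ :=
  L1.integralCLM.comp (LpToLpRestrictCLM α ℝ ℝ μ 1 s)

lemma setIntegralCLM_apply (s : Set α) (f : α →₁[μ] ℝ) :
    setIntegralCLM μ s f = ∫ x in s, f x ∂μ := by
  rw [setIntegralCLM, ContinuousLinearMap.comp_apply, ← L1.integral_eq, L1.integral_eq_integral]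
  exact integral_congr_ae (LpToLpRestrictCLM_coeFn ℝ s f)

lemma sum_abs_setIntegral_le {s : ℕ → Set α} (hs : ∀ k, MeasurableSet (s k))
    (hd : Pairwise (Disjoint on s)) (f : α →₁[μ] ℝ) (u : Finset ℕ) :
    ∑ k ∈ u, |∫ x in s k, f x ∂μ| ≤ ‖f‖ := by
  have hf : Integrable (fun x => ‖f x‖) μ := (L1.integrable_coeFn f).norm
  calc ∑ k ∈ u, |∫ x in s k, f x ∂μ| ≤ ∑ k ∈ u, ∫ x in s k, ‖f x‖ ∂μ :=
        Finset.sum_le_sum fun k _ => by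
          rw [← Real.norm_eq_abs]
          exact norm_integral_le_integral_norm _
    _ = ∫ x in ⋃ k ∈ u, s k, ‖f x‖ ∂μ :=
        (integral_biUnion_finset u (fun k _ => hs k) (hd.set_pairwise _)
          fun _ _ => hf.integrableOn).symm
    _ ≤ ∫ x, ‖f x‖ ∂μ := setIntegral_le_integral hf (ae_of_all _ fun _ => norm_nonneg _)
    _ = ‖f‖ := (L1.norm_eq_integral_norm f).symm

theorem SchurProperty.of_forall_completelyContinuous_into_dual_L1
    {E : Type*} [NormedAddCommGroup E] [NormedSpace ℝ E] {s : ℕ → Set α}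
    (hs : ∀ k, MeasurableSet (s k)) (hd : Pairwise (Disjoint on s)) (hμ₀ : ∀ k, μ (s k) ≠ 0)
    (hμ : ∀ k, μ (s k) ≠ ∞)
    (hcc : ∀ T : E →L[ℝ] ((α →₁[μ] ℝ) →L[ℝ] ℝ), CompletelyContinuous T) :
    SchurProperty E := by
  have hreal : ∀ k, μ.real (s k) ≠ 0 := fun k => ENNReal.toReal_ne_zero.2 ⟨hμ₀ k, hμ k⟩
  refine .of_forall_completelyContinuous_into_dual (fun k => setIntegralCLM μ (s k))
    (fun n => indicatorConstLp 1 (hs n) (hμ n) (μ.real (s n))⁻¹) ?_ (fun n => ?_) (fun k n => ?_)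
    hcc
  · simpa only [setIntegralCLM_apply] using sum_abs_setIntegral_le hs hd
  · rw [norm_indicatorConstLp one_ne_zero ENNReal.one_ne_top]
    simp [abs_of_nonneg measureReal_nonneg, hreal]
  · rw [setIntegralCLM_apply, setIntegral_indicatorConstLp (hs k) (hs n), smul_eq_mul]
    split_ifs with hkn
    · subst hkn
      rw [inter_self, mul_inv_cancel₀ (hreal k)]
    · simp [(hd (Ne.symm hkn)).inter_eq]

end LOne

theorem schurProperty_of_forall_completelyContinuous_into_dual_LOne_general
    {E : Type*} [NormedAddCommGroup E] [NormedSpace ℝ E]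
    (hcc : ∀ T : E →L[ℝ] (LOneUnitInterval →L[ℝ] ℝ), CompletelyContinuous T) :
    SchurProperty E := by
  have hanti : Antitone fun k : ℕ => (2⁻¹ : ℝ) ^ k := pow_right_anti₀ (by norm_num) (by norm_num)
  have hsub : ∀ k : ℕ, Ioc ((2⁻¹ : ℝ) ^ (k + 1)) (2⁻¹ ^ k) ⊆ Icc 0 1 := fun k =>
    Ioc_subset_Icc_self.trans
      (Icc_subset_Icc (by positivity) (pow_le_one₀ (by norm_num) (by norm_num)))
  refine SchurProperty.of_forall_completelyContinuous_into_dual_L1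
    (s := fun k => Ioc ((2⁻¹ : ℝ) ^ (k + 1)) (2⁻¹ ^ k)) (fun _ => measurableSet_Ioc)
    (by simpa using hanti.pairwise_disjoint_on_Ioc_succ) (fun k => ?_)
    (fun _ => measure_ne_top _ _) hcc
  rw [Measure.restrict_apply measurableSet_Ioc, inter_eq_left.2 (hsub k), Real.volume_Ioc,
    ne_eq, ENNReal.ofReal_eq_zero, not_le, sub_pos]
  exact pow_lt_pow_right_of_lt_one₀ (by norm_num) (by norm_num) (Nat.lt_succ_self k)

/-- If every bounded operator from `E` into `(L¹[0,1])*` is completely continuous, then `E`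
has the Schur property. -/
theorem schurProperty_of_forall_completelyContinuous_into_dual_LOne
    {E : Type*} [NormedAddCommGroup E] [NormedSpace ℝ E] [CompleteSpace E]
    (hcc : ∀ T : E →L[ℝ] (LOneUnitInterval →L[ℝ] ℝ), CompletelyContinuous T) :
    SchurProperty E :=
  schurProperty_of_forall_completelyContinuous_into_dual_LOne_general hcc
end
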